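/- arXiv:2011.13138 — 4 statements merged into one kernel-verified Lean document; each statement's English description precedes it below -/
import Mathlib

section
/- Let k ≥ 1 be odd, λ = (k+2, k), n = 2k+2, and W = ⟨e_1⟩ ⊆ V_λ. Then W is isotropic for β_λ, W^⊥ = ⟨e_1, …, e_{k+1}, f_1, …, f_k⟩, and x_λ(W) ⊆ W, x_λ(W^⊥) ⊆ W^⊥. Moreover, with ν = (k, k) and μ ∈ ℂ a fixed square root of −2, the linear map Q : W^⊥/W → V_ν determined by Q((e_{j+1} + f_j) + W) = μ·e_j and Q((e_{j+1} − f_j) + W) = μ·f_j for 1 ≤ j ≤ k is a linear isomorphism satisfying β̄_λ(u, v) = β_ν(Q u, Q v) for all u, v ∈ W^⊥/W, and Q ∘ x̄_λ = x_ν ∘ Q. -/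
open Complex Submodule

noncomputable section

/-- `V p q` is the vector space `ℂ^(p+q)` with coordinates indexed by `Fin p ⊕ Fin q`,
corresponding to the basis `e_1, …, e_p, f_1, …, f_q` of `V_λ` for `λ = (p, q)`. -/
abbrev V (p q : ℕ) := (Fin p ⊕ Fin q) → ℂ

/-- The basis vector `e_i` (1-based index `i`; it is `0` if `i` is out of range). -/
def ee (p q : ℕ) (i : ℕ) : V p q :=
  Sum.elim (fun j => if (j : ℕ) + 1 = i then 1 else 0) (fun _ => 0)

/-- The basis vector `f_j` (1-based index `j`; it is `0` if `j` is out of range). -/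
def ff (p q : ℕ) (i : ℕ) : V p q :=
  Sum.elim (fun _ => 0) (fun j => if (j : ℕ) + 1 = i then 1 else 0)

/-- The nilpotent endomorphism `x_λ` with `x(e_i) = e_{i-1}`, `x(f_j) = f_{j-1}`. -/
def xmap (p q : ℕ) : V p q →ₗ[ℂ] V p q where
  toFun v := Sum.elim
    (fun j => if h : (j : ℕ) + 1 < p then v (Sum.inl ⟨(j : ℕ) + 1, h⟩) else 0)
    (fun j => if h : (j : ℕ) + 1 < q then v (Sum.inr ⟨(j : ℕ) + 1, h⟩) else 0)
  map_add' u v := by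
    funext s; cases s <;> dsimp <;> split <;> simp
  map_smul' c v := by
    funext s; cases s <;> dsimp <;> split <;> simp

/-- The Gram matrix of the bilinear form `β_λ` for `λ = (p, q)` (0-based indices). -/
def gram (p q : ℕ) : Matrix (Fin p ⊕ Fin q) (Fin p ⊕ Fin q) ℂ :=
  fun s t =>
    match s, t with
    | Sum.inl i, Sum.inl j =>
        if p = q then 0 else if (i : ℕ) + (j : ℕ) + 2 = p + 1 then (-1 : ℂ) ^ (i : ℕ) else 0
    | Sum.inl i, Sum.inr j =>
        if p = q then (if (i : ℕ) + (j : ℕ) + 2 = p + 1 then (-1 : ℂ) ^ (i : ℕ) else 0) else 0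
    | Sum.inr i, Sum.inl j =>
        if p = q then (if (j : ℕ) + (i : ℕ) + 2 = p + 1 then (-1 : ℂ) ^ (j : ℕ) else 0) else 0
    | Sum.inr i, Sum.inr j =>
        if p = q then 0 else if (i : ℕ) + (j : ℕ) + 2 = q + 1 then (-1 : ℂ) ^ (i : ℕ) else 0

/-- The symmetric bilinear form `β_λ` for `λ = (p, q)`. -/
def beta (p q : ℕ) : LinearMap.BilinForm ℂ (V p q) :=
  Matrix.toLinearMap₂' ℂ (gram p q)

/-- Orthogonal complement with respect to `β_λ`. -/
def orth (p q : ℕ) (W : Submodule ℂ (V p q)) : Submodule ℂ (V p q) :=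
  (beta p q).orthogonal W

/-- The subspace `⟨e_1, …, e_r, f_1, …, f_s⟩`. -/
def EF (p q r s : ℕ) : Submodule ℂ (V p q) :=
  Submodule.span ℂ
    ({v | ∃ i, 1 ≤ i ∧ i ≤ r ∧ v = ee p q i} ∪ {v | ∃ j, 1 ≤ j ∧ j ≤ s ∧ v = ff p q j})

/-- A complete isotropic flag in `(V_λ, β_λ)`, encoded as a function `ℕ → Submodule`
which is `⊤` from degree `p+q` on. -/
def IsFlag (p q : ℕ) (F : ℕ → Submodule ℂ (V p q)) : Prop :=
  (∀ i ≤ p + q, Module.finrank ℂ (F i) = i) ∧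
  (∀ i < p + q, F i ≤ F (i + 1)) ∧
  (∀ i ≤ p + q, F (p + q - i) = orth p q (F i)) ∧
  (∀ i, p + q ≤ i → F i = ⊤)

/-- The flag `F` lies in the Springer fiber of `x_λ`. -/
def InSpringer (p q : ℕ) (F : ℕ → Submodule ℂ (V p q)) : Prop :=
  ∀ i < p + q, (F (i + 1)).map (xmap p q) ≤ F i
/-- The coordinate projection `V_(p,q) → V_(p',q')`, sending `e_i ↦ e_i` (resp. `f_j ↦ f_j`)
when the index is in range and to `0` otherwise. -/
def Pmap (p q p' q' : ℕ) : V p q →ₗ[ℂ] V p' q' where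
  toFun v := Sum.elim
    (fun i => if h : (i : ℕ) < p then v (Sum.inl ⟨(i : ℕ), h⟩) else 0)
    (fun j => if h : (j : ℕ) < q then v (Sum.inr ⟨(j : ℕ), h⟩) else 0)
  map_add' u v := by
    funext s; cases s <;> dsimp <;> split <;> simp
  map_smul' c v := by
    funext s; cases s <;> dsimp <;> split <;> simp

/-- The flag in `V_(p',q')` induced, via a linear map `Q` defined on `W^⊥` and killing `W`
(representing an isomorphism `W^⊥/W ≅ V_(p',q')`), by the part `F_l ⊆ F_{l+1} ⊆ …` of a
flag `F` in `V_(p,q)`:  `F''_i = Q(F_{l+i}/W)` for `i ≤ (p'+q')/2`, and the remaining spaces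
are determined by taking orthogonal complements with respect to `β_(p',q')`. -/
def Qflag (p q p' q' l : ℕ) (W : Submodule ℂ (V p q)) (Q : V p q →ₗ[ℂ] V p' q')
    (F : ℕ → Submodule ℂ (V p q)) : ℕ → Submodule ℂ (V p' q') :=
  fun i =>
    if i ≤ (p' + q') / 2 then (F (l + i) ⊓ orth p q W).map Q
    else if i ≤ p' + q' then orth p' q' ((F (l + (p' + q' - i)) ⊓ orth p q W).map Q)
    else ⊤

/-- The flag in `V_(2t,2t)` obtained from a flag `F` in `V_(p,q)` by applying the projection
`Pmap` to `F_0, …, F_{2t}` and completing by orthogonal complements. -/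
def Pflag (p q t : ℕ) (F : ℕ → Submodule ℂ (V p q)) : ℕ → Submodule ℂ (V (2*t) (2*t)) :=
  fun i =>
    if i ≤ 2*t then (F i).map (Pmap p q (2*t) (2*t))
    else if i ≤ 4*t then orth (2*t) (2*t) ((F (4*t - i)).map (Pmap p q (2*t) (2*t)))
    else ⊤

/-- The conditions determining the quotient isomorphism `Q^III_3 : W^⊥/W → V_ν`
(`W = ⟨e_1⟩`, `λ = (k+2,k)`, `ν = (k,k)`, `μ² = -2`):
`Q((e_{j+1} + f_j) + W) = μ·e_j` and `Q((e_{j+1} - f_j) + W) = μ·f_j` for `1 ≤ j ≤ k`,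
encoded on an ambient linear map killing `W`. -/
def QCondIII3 (k : ℕ) (μ : ℂ) (Q : V (k+2) k →ₗ[ℂ] V k k) : Prop :=
  (∀ j, 1 ≤ j → j ≤ k → Q (ee (k+2) k (j+1) + ff (k+2) k j) = μ • ee k k j) ∧
  (∀ j, 1 ≤ j → j ≤ k → Q (ee (k+2) k (j+1) - ff (k+2) k j) = μ • ff k k j) ∧
  (∀ u ∈ EF (k+2) k 1 0, Q u = 0)


open Sum Fin

/-- index lemma -/
lemma rev_succ_castSucc {k : ℕ} (i : Fin k) :
    (Fin.rev (i.castSucc.succ : Fin (k+2))) = (Fin.rev i).castSucc.succ := by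
  have := i.isLt
  ext
  simp [Fin.val_rev]
  omega

lemma neg_one_pow_rev {k : ℕ} (hk : Odd k) (i : Fin k) :
    ((-1 : ℂ)) ^ ((Fin.rev i : Fin k) : ℕ) = (-1) ^ (i : ℕ) := by
  obtain ⟨c, rfl⟩ := hk
  have := i.isLt
  rw [neg_one_pow_eq_pow_mod_two, Fin.val_rev, neg_one_pow_eq_pow_mod_two (n := (i:ℕ))]
  congr 1
  omega

lemma beta_ne {p q : ℕ} (h : p ≠ q) (u v : V p q) :
    beta p q u v = (∑ i : Fin p, (-1) ^ (i : ℕ) * (u (inl i) * v (inl i.rev)))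
      + ∑ i : Fin q, (-1) ^ (i : ℕ) * (u (inr i) * v (inr i.rev)) := by
  rw [beta, Matrix.toLinearMap₂'_apply]
  rw [Fintype.sum_sum_type]
  congr 1
  · apply Finset.sum_congr rfl
    intro i _
    rw [Fintype.sum_sum_type]
    have h1 : ∀ j : Fin p, gram p q (inl i) (inl j)
        = if j = i.rev then (-1 : ℂ)^(i:ℕ) else 0 := by
      intro j
      have hd : gram p q (inl i) (inl j)
          = if p = q then 0 else if (i:ℕ)+(j:ℕ)+2 = p+1 then (-1:ℂ)^(i:ℕ) else 0 := rfl
      rw [hd, if_neg h]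
      have hi := i.isLt; have hj := j.isLt
      by_cases hc : (i:ℕ)+(j:ℕ)+2 = p+1
      · rw [if_pos hc, if_pos (by ext; simp only [Fin.val_rev]; omega)]
      · rw [if_neg hc, if_neg (by rintro rfl; simp only [Fin.val_rev] at hc; omega)]
    have h2 : ∀ j : Fin q, gram p q (inl i) (inr j) = 0 := by
      intro j
      have hd : gram p q (inl i) (inr j)
          = if p = q then (if (i:ℕ)+(j:ℕ)+2 = p+1 then (-1:ℂ)^(i:ℕ) else 0) else 0 := rfl
      rw [hd, if_neg h]
    simp only [h1, h2, smul_eq_mul, mul_ite, mul_zero, mul_one, Finset.sum_ite_eq',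
      Finset.mem_univ, if_true, Finset.sum_const_zero, add_zero]
    ring
  · apply Finset.sum_congr rfl
    intro i _
    rw [Fintype.sum_sum_type]
    have h1 : ∀ j : Fin q, gram p q (inr i) (inr j)
        = if j = i.rev then (-1 : ℂ)^(i:ℕ) else 0 := by
      intro j
      have hd : gram p q (inr i) (inr j)
          = if p = q then 0 else if (i:ℕ)+(j:ℕ)+2 = q+1 then (-1:ℂ)^(i:ℕ) else 0 := rfl
      rw [hd, if_neg h]
      have hi := i.isLt; have hj := j.isLt
      by_cases hc : (i:ℕ)+(j:ℕ)+2 = q+1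
      · rw [if_pos hc, if_pos (by ext; simp only [Fin.val_rev]; omega)]
      · rw [if_neg hc, if_neg (by rintro rfl; simp only [Fin.val_rev] at hc; omega)]
    have h2 : ∀ j : Fin p, gram p q (inr i) (inl j) = 0 := by
      intro j
      have hd : gram p q (inr i) (inl j)
          = if p = q then (if (j:ℕ)+(i:ℕ)+2 = p+1 then (-1:ℂ)^(j:ℕ) else 0) else 0 := rfl
      rw [hd, if_neg h]
    simp only [h1, h2, smul_eq_mul, mul_ite, mul_zero, mul_one, Finset.sum_ite_eq',
      Finset.mem_univ, if_true, Finset.sum_const_zero, zero_add]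
    ring

lemma beta_eq (k : ℕ) (u v : V k k) :
    beta k k u v = (∑ i : Fin k, (-1) ^ (i : ℕ) * (u (inl i) * v (inr i.rev)))
      + ∑ i : Fin k, (-1) ^ ((i.rev : Fin k) : ℕ) * (u (inr i) * v (inl i.rev)) := by
  rw [beta, Matrix.toLinearMap₂'_apply, Fintype.sum_sum_type]
  congr 1
  · apply Finset.sum_congr rfl
    intro i _
    rw [Fintype.sum_sum_type]
    have h1 : ∀ j : Fin k, gram k k (inl i) (inr j)
        = if j = i.rev then (-1 : ℂ)^(i:ℕ) else 0 := by
      intro j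
      have hd : gram k k (inl i) (inr j)
          = if k = k then (if (i:ℕ)+(j:ℕ)+2 = k+1 then (-1:ℂ)^(i:ℕ) else 0) else 0 := rfl
      rw [hd, if_pos rfl]
      have hi := i.isLt; have hj := j.isLt
      by_cases hc : (i:ℕ)+(j:ℕ)+2 = k+1
      · rw [if_pos hc, if_pos (by ext; simp only [Fin.val_rev]; omega)]
      · rw [if_neg hc, if_neg (by rintro rfl; simp only [Fin.val_rev] at hc; omega)]
    have h2 : ∀ j : Fin k, gram k k (inl i) (inl j) = 0 := by
      intro j
      have hd : gram k k (inl i) (inl j)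
          = if k = k then 0 else if (i:ℕ)+(j:ℕ)+2 = k+1 then (-1:ℂ)^(i:ℕ) else 0 := rfl
      rw [hd, if_pos rfl]
    simp only [h1, h2, smul_eq_mul, mul_ite, mul_zero, mul_one, Finset.sum_ite_eq',
      Finset.mem_univ, if_true, Finset.sum_const_zero, zero_add]
    ring
  · apply Finset.sum_congr rfl
    intro i _
    rw [Fintype.sum_sum_type]
    have h1 : ∀ j : Fin k, gram k k (inr i) (inl j)
        = if j = i.rev then (-1 : ℂ)^((i.rev : Fin k):ℕ) else 0 := by
      intro j
      have hd : gram k k (inr i) (inl j)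
          = if k = k then (if (j:ℕ)+(i:ℕ)+2 = k+1 then (-1:ℂ)^(j:ℕ) else 0) else 0 := rfl
      rw [hd, if_pos rfl]
      have hi := i.isLt; have hj := j.isLt
      by_cases hc : (j:ℕ)+(i:ℕ)+2 = k+1
      · rw [if_pos hc, if_pos (by ext; simp only [Fin.val_rev]; omega)]
        congr 1
        simp only [Fin.val_rev]; omega
      · rw [if_neg hc, if_neg (by rintro rfl; simp only [Fin.val_rev] at hc; omega)]
    have h2 : ∀ j : Fin k, gram k k (inr i) (inr j) = 0 := by
      intro j
      have hd : gram k k (inr i) (inr j)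
          = if k = k then 0 else if (i:ℕ)+(j:ℕ)+2 = k+1 then (-1:ℂ)^(i:ℕ) else 0 := rfl
      rw [hd, if_pos rfl]
    simp only [h1, h2, smul_eq_mul, mul_ite, mul_zero, mul_one, Finset.sum_ite_eq',
      Finset.mem_univ, if_true, Finset.sum_const_zero, add_zero]
    ring

lemma beta_e1 (k : ℕ) (u : V (k+2) k) :
    beta (k+2) k (ee (k+2) k 1) u = u (inl (Fin.last (k+1))) := by
  rw [beta_ne (by omega)]
  have h1 : ∀ i : Fin (k+2), ee (k+2) k 1 (inl i) = if i = 0 then 1 else 0 := by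
    intro i; simp only [ee, Sum.elim_inl]
    by_cases h : i = 0
    · subst h; simp
    · rw [if_neg h, if_neg]; intro e; exact h (Fin.ext (by rw [Fin.val_zero]; omega))
  have h2 : ∀ i : Fin k, ee (k+2) k 1 (inr i) = 0 := fun i => rfl
  have h3 : (Fin.rev (0 : Fin (k+2))) = Fin.last (k+1) := by
    ext; simp [Fin.val_rev]
  simp [h1, h2, ite_mul, mul_ite, h3]

lemma EF10 (k : ℕ) : EF (k+2) k 1 0 = Submodule.span ℂ {ee (k+2) k 1} := by
  unfold EF
  congr 1
  ext w
  constructor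
  · rintro (⟨i, h1, h2, rfl⟩ | ⟨j, h1, h2, rfl⟩)
    · have : i = 1 := le_antisymm h2 h1
      subst this; rfl
    · omega
  · rintro rfl
    exact Or.inl ⟨1, le_refl 1, le_refl 1, rfl⟩

lemma mem_orth_iff (k : ℕ) (u : V (k+2) k) :
    u ∈ orth (k+2) k (EF (k+2) k 1 0) ↔ u (inl (Fin.last (k+1))) = 0 := by
  rw [orth, EF10, LinearMap.BilinForm.mem_orthogonal_iff]
  constructor
  · intro h
    have := h (ee (k+2) k 1) (Submodule.mem_span_singleton_self _)
    rwa [beta_e1] at this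
  · intro h n hn
    rw [Submodule.mem_span_singleton] at hn
    obtain ⟨c, rfl⟩ := hn
    rw [map_smul, LinearMap.smul_apply, beta_e1, h, smul_zero]

lemma decomp {p q : ℕ} (v : V p q) :
    v = (∑ i : Fin p, v (inl i) • ee p q ((i:ℕ)+1)) + ∑ j : Fin q, v (inr j) • ff p q ((j:ℕ)+1) := by
  funext s
  cases s with
  | inl i0 =>
    simp only [Pi.add_apply, Finset.sum_apply, Pi.smul_apply, ee, ff, Sum.elim_inl,
      smul_eq_mul, mul_ite, mul_one, mul_zero, add_left_inj]
    rw [Finset.sum_const_zero, add_zero]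
    have : ∀ i : Fin p, (if (i0:ℕ) = (i:ℕ) then v (inl i) else 0)
        = if i0 = i then v (inl i) else 0 := by
      intro i; simp [Fin.ext_iff]
    simp only [this, Finset.sum_ite_eq, Finset.mem_univ, if_true]
  | inr j0 =>
    simp only [Pi.add_apply, Finset.sum_apply, Pi.smul_apply, ee, ff, Sum.elim_inr,
      smul_eq_mul, mul_ite, mul_one, mul_zero, add_left_inj]
    rw [Finset.sum_const_zero, zero_add]
    have : ∀ j : Fin q, (if (j0:ℕ) = (j:ℕ) then v (inr j) else 0)
        = if j0 = j then v (inr j) else 0 := by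
      intro j; simp [Fin.ext_iff]
    simp only [this, Finset.sum_ite_eq, Finset.mem_univ, if_true]

lemma orth_eq_EF (k : ℕ) : orth (k+2) k (EF (k+2) k 1 0) = EF (k+2) k (k+1) k := by
  apply le_antisymm
  · intro u hu
    rw [mem_orth_iff] at hu
    rw [decomp u]
    apply Submodule.add_mem
    · apply Submodule.sum_mem
      intro i _
      by_cases hi : i = Fin.last (k+1)
      · subst hi; rw [hu, zero_smul]; exact Submodule.zero_mem _
      · exact Submodule.smul_mem _ _ (Submodule.subset_span
          (Or.inl ⟨(i:ℕ)+1, by omega, by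
            have := Fin.val_lt_last hi; omega, rfl⟩))
    · apply Submodule.sum_mem
      intro j _
      exact Submodule.smul_mem _ _ (Submodule.subset_span
        (Or.inr ⟨(j:ℕ)+1, by omega, by have := j.isLt; omega, rfl⟩))
  · rw [EF]
    apply Submodule.span_le.mpr
    rintro w (⟨i, h1, h2, rfl⟩ | ⟨j, h1, h2, rfl⟩)
    · simp only [SetLike.mem_coe, mem_orth_iff, ee, Sum.elim_inl, Fin.val_last]
      rw [if_neg (by omega)]
    · simp only [SetLike.mem_coe, mem_orth_iff, ff, Sum.elim_inl, Fin.val_last]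

/-- The explicit model for `Q`. -/
def Q0 (k : ℕ) (μ : ℂ) : V (k+2) k →ₗ[ℂ] V k k where
  toFun v := Sum.elim
    (fun t => (μ/2) * (v (inl (t.castSucc.succ : Fin (k+2))) + v (inr t)))
    (fun t => (μ/2) * (v (inl (t.castSucc.succ : Fin (k+2))) - v (inr t)))
  map_add' u v := by funext s; cases s <;> dsimp <;> ring
  map_smul' c v := by funext s; cases s <;> dsimp <;> ring

lemma Q0_apply_inl (k : ℕ) (μ : ℂ) (v : V (k+2) k) (t : Fin k) :
    Q0 k μ v (inl t) = (μ/2) * (v (inl (t.castSucc.succ : Fin (k+2))) + v (inr t)) := rfl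

lemma Q0_apply_inr (k : ℕ) (μ : ℂ) (v : V (k+2) k) (t : Fin k) :
    Q0 k μ v (inr t) = (μ/2) * (v (inl (t.castSucc.succ : Fin (k+2))) - v (inr t)) := rfl

lemma Q0_cond (k : ℕ) (μ : ℂ) : QCondIII3 k μ (Q0 k μ) := by
  refine ⟨?_, ?_, ?_⟩
  · intro j h1 h2
    funext s
    cases s with
    | inl t =>
      have ht := t.isLt
      simp only [Q0_apply_inl, Pi.add_apply, Pi.smul_apply, ee, ff, Sum.elim_inl, Sum.elim_inr,
        Fin.val_succ, Fin.coe_castSucc, smul_eq_mul]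
      by_cases h : (t:ℕ) + 1 = j
      · rw [if_pos (by omega), if_pos h]; ring
      · rw [if_neg (by omega), if_neg h]; ring
    | inr t =>
      have ht := t.isLt
      simp only [Q0_apply_inr, Pi.add_apply, Pi.smul_apply, ee, ff, Sum.elim_inl, Sum.elim_inr,
        Fin.val_succ, Fin.coe_castSucc, smul_eq_mul]
      by_cases h : (t:ℕ) + 1 = j
      · rw [if_pos (by omega), if_pos h]; ring
      · rw [if_neg (by omega), if_neg h]; ring
  · intro j h1 h2
    funext s
    cases s with
    | inl t =>
      have ht := t.isLt
      simp only [Q0_apply_inl, Pi.sub_apply, Pi.smul_apply, ee, ff, Sum.elim_inl, Sum.elim_inr,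
        Fin.val_succ, Fin.coe_castSucc, smul_eq_mul]
      by_cases h : (t:ℕ) + 1 = j
      · rw [if_pos (by omega), if_pos h]; ring
      · rw [if_neg (by omega), if_neg h]; ring
    | inr t =>
      have ht := t.isLt
      simp only [Q0_apply_inr, Pi.sub_apply, Pi.smul_apply, ee, ff, Sum.elim_inl, Sum.elim_inr,
        Fin.val_succ, Fin.coe_castSucc, smul_eq_mul]
      by_cases h : (t:ℕ) + 1 = j
      · rw [if_pos (by omega), if_pos h]; ring
      · rw [if_neg (by omega), if_neg h]; ring
  · intro u hu
    rw [EF10] at hu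
    rw [Submodule.mem_span_singleton] at hu
    obtain ⟨c, rfl⟩ := hu
    rw [map_smul]
    have : Q0 k μ (ee (k+2) k 1) = 0 := by
      funext s
      cases s with
      | inl t =>
        simp only [Q0_apply_inl, ee, Sum.elim_inl, Sum.elim_inr, Fin.val_succ, Fin.coe_castSucc]
        rw [if_neg (by omega)]
        simp
      | inr t =>
        simp only [Q0_apply_inr, ee, Sum.elim_inl, Sum.elim_inr, Fin.val_succ, Fin.coe_castSucc]
        rw [if_neg (by omega)]
        simp
    rw [this, smul_zero]

lemma xmap_last (k : ℕ) (v : V (k+2) k) :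
    xmap (k+2) k v (inl (Fin.last (k+1))) = 0 := by
  show (if h : ((Fin.last (k+1) : Fin (k+2)) :ℕ) + 1 < k+2 then _ else 0) = 0
  rw [dif_neg (by simp [Fin.val_last])]

lemma xmap_e1 (k : ℕ) : xmap (k+2) k (ee (k+2) k 1) = 0 := by
  funext s
  cases s with
  | inl j =>
    show (if h : (j:ℕ)+1 < k+2 then ee (k+2) k 1 (inl ⟨(j:ℕ)+1, h⟩) else 0) = 0
    split
    · simp [ee]
    · rfl
  | inr j =>
    show (if h : (j:ℕ)+1 < k then ee (k+2) k 1 (inr ⟨(j:ℕ)+1, h⟩) else 0) = 0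
    split <;> rfl

lemma Q_eq_Q0 (k : ℕ) (μ : ℂ) (Q : V (k+2) k →ₗ[ℂ] V k k) (hQ : QCondIII3 k μ Q) :
    ∀ u ∈ orth (k+2) k (EF (k+2) k 1 0), Q u = Q0 k μ u := by
  have hQ0 := Q0_cond k μ
  have key : orth (k+2) k (EF (k+2) k 1 0) ≤ LinearMap.ker (Q - Q0 k μ) := by
    rw [orth_eq_EF, EF]
    apply Submodule.span_le.mpr
    have hD : ∀ j, 1 ≤ j → j ≤ k →
        (Q - Q0 k μ) (ee (k+2) k (j+1)) = 0 ∧ (Q - Q0 k μ) (ff (k+2) k j) = 0 := by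
      intro j h1 h2
      have hp : (Q - Q0 k μ) (ee (k+2) k (j+1) + ff (k+2) k j) = 0 := by
        rw [LinearMap.sub_apply, hQ.1 j h1 h2, hQ0.1 j h1 h2, sub_self]
      have hm : (Q - Q0 k μ) (ee (k+2) k (j+1) - ff (k+2) k j) = 0 := by
        rw [LinearMap.sub_apply, hQ.2.1 j h1 h2, hQ0.2.1 j h1 h2, sub_self]
      constructor
      · have he : ee (k+2) k (j+1) = (2⁻¹ : ℂ) •
            ((ee (k+2) k (j+1) + ff (k+2) k j) + (ee (k+2) k (j+1) - ff (k+2) k j)) := by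
          funext s; simp only [Pi.smul_apply, Pi.add_apply, Pi.sub_apply, smul_eq_mul]; ring
        rw [he, map_smul, map_add, hp, hm, add_zero, smul_zero]
      · have hf : ff (k+2) k j = (2⁻¹ : ℂ) •
            ((ee (k+2) k (j+1) + ff (k+2) k j) - (ee (k+2) k (j+1) - ff (k+2) k j)) := by
          funext s; simp only [Pi.smul_apply, Pi.add_apply, Pi.sub_apply, smul_eq_mul]; ring
        rw [hf, map_smul, map_sub, hp, hm, sub_zero, smul_zero]
    rintro w (⟨i, h1, h2, rfl⟩ | ⟨j, h1, h2, rfl⟩)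
    · by_cases hi : i = 1
      · subst hi
        have he1 : ee (k+2) k 1 ∈ EF (k+2) k 1 0 :=
          Submodule.subset_span (Or.inl ⟨1, le_refl 1, le_refl 1, rfl⟩)
        simp only [SetLike.mem_coe, LinearMap.mem_ker, LinearMap.sub_apply,
          hQ.2.2 _ he1, hQ0.2.2 _ he1, sub_self]
      · obtain ⟨j, rfl⟩ : ∃ j, i = j + 1 := ⟨i - 1, by omega⟩
        exact (hD j (by omega) (by omega)).1
    · exact (hD j h1 h2).2
  intro u hu
  have := key hu
  rwa [LinearMap.mem_ker, LinearMap.sub_apply, sub_eq_zero] at this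

lemma mu_ne (μ : ℂ) (hμ : μ^2 = -2) : μ ≠ 0 := by
  intro h; rw [h] at hμ; norm_num at hμ

lemma Q0_inj (k : ℕ) (μ : ℂ) (hμ : μ^2 = -2) (u : V (k+2) k)
    (hu : u (inl (Fin.last (k+1))) = 0) (h0 : Q0 k μ u = 0) : u ∈ EF (k+2) k 1 0 := by
  have hμ0 : μ / 2 ≠ 0 := div_ne_zero (mu_ne μ hμ) two_ne_zero
  have hAB : ∀ t : Fin k, u (inl (t.castSucc.succ : Fin (k+2))) = 0 ∧ u (inr t) = 0 := by
    intro t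
    have h1 := congrFun h0 (inl t)
    have h2 := congrFun h0 (inr t)
    rw [Q0_apply_inl] at h1
    rw [Q0_apply_inr] at h2
    simp only [Pi.zero_apply, mul_eq_zero] at h1 h2
    rcases h1 with h1 | h1
    · exact absurd h1 hμ0
    rcases h2 with h2 | h2
    · exact absurd h2 hμ0
    exact ⟨by linear_combination (h1 + h2) / 2, by linear_combination (h1 - h2) / 2⟩
  rw [EF10, Submodule.mem_span_singleton]
  refine ⟨u (inl 0), ?_⟩
  funext s
  cases s with
  | inl i =>
    simp only [Pi.smul_apply, ee, Sum.elim_inl, smul_eq_mul]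
    by_cases hi : i = 0
    · subst hi; simp
    · rw [if_neg (fun e => hi (Fin.ext (by rw [Fin.val_zero]; omega))), mul_zero]
      have hiv := i.isLt
      by_cases hl : (i:ℕ) = k + 1
      · have : i = Fin.last (k+1) := by ext; simp [Fin.val_last, hl]
        rw [this, hu]
      · have h1 : 1 ≤ (i:ℕ) := by
          rcases Nat.eq_zero_or_pos (i:ℕ) with h | h
          · exact absurd (Fin.ext h) hi
          · exact h
        set t : Fin k := ⟨(i:ℕ) - 1, by omega⟩ with ht
        have : (t.castSucc.succ : Fin (k+2)) = i := by ext; simp [ht]; omega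
        rw [← this, (hAB t).1]
  | inr j =>
    simp only [Pi.smul_apply, ee, Sum.elim_inr, smul_eq_mul, mul_zero]
    exact ((hAB j).2).symm

lemma Q0_surj (k : ℕ) (μ : ℂ) (hμ : μ^2 = -2) (w : V k k) :
    ∃ u : V (k+2) k, u (inl (Fin.last (k+1))) = 0 ∧ Q0 k μ u = w := by
  have hμ0 : μ ≠ 0 := mu_ne μ hμ
  refine ⟨Sum.elim
      (fun i => μ⁻¹ * ∑ t : Fin k, (if (t:ℕ)+1 = (i:ℕ) then (w (inl t) + w (inr t)) else 0))
      (fun t => μ⁻¹ * (w (inl t) - w (inr t))), ?_, ?_⟩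
  · simp only [Sum.elim_inl, Fin.val_last]
    have : ∀ t : Fin k, (if (t:ℕ)+1 = k+1 then (w (inl t) + w (inr t)) else 0) = 0 := by
      intro t; rw [if_neg (by have := t.isLt; omega)]
    rw [Finset.sum_congr rfl (fun t _ => this t), Finset.sum_const_zero, mul_zero]
  · funext s
    have hsum : ∀ t : Fin k, (∑ t' : Fin k,
        (if (t':ℕ)+1 = ((t.castSucc.succ : Fin (k+2)):ℕ) then (w (inl t') + w (inr t')) else 0))
        = w (inl t) + w (inr t) := by
      intro t
      have : ∀ t' : Fin k, (if (t':ℕ)+1 = ((t.castSucc.succ : Fin (k+2)):ℕ)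
          then (w (inl t') + w (inr t')) else 0)
          = if t' = t then (w (inl t') + w (inr t')) else 0 := by
        intro t'
        by_cases h : t' = t
        · subst h; rw [if_pos (by simp [Fin.val_succ, Fin.coe_castSucc]), if_pos rfl]
        · have h' : (t':ℕ) ≠ (t:ℕ) := fun e => h (Fin.ext e)
          rw [if_neg (by simp only [Fin.val_succ, Fin.coe_castSucc]; omega), if_neg h]
      rw [Finset.sum_congr rfl (fun t' _ => this t'), Finset.sum_ite_eq', if_pos (Finset.mem_univ t)]
    cases s with
    | inl t =>
      rw [Q0_apply_inl]
      simp only [Sum.elim_inl, Sum.elim_inr, hsum]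
      field_simp
      ring
    | inr t =>
      rw [Q0_apply_inr]
      simp only [Sum.elim_inl, Sum.elim_inr, hsum]
      field_simp
      ring

lemma xmap_inl_eq {p q : ℕ} (v : V p q) (j : Fin p) (m : ℕ) (hm : m < p) (h : m = (j:ℕ)+1) :
    xmap p q v (inl j) = v (inl ⟨m, hm⟩) := by
  subst h
  show (if h' : (j:ℕ)+1 < p then v (inl ⟨(j:ℕ)+1, h'⟩) else 0) = _
  rw [dif_pos hm]

lemma xmap_inr_eq {p q : ℕ} (v : V p q) (j : Fin q) (m : ℕ) (hm : m < q) (h : m = (j:ℕ)+1) :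
    xmap p q v (inr j) = v (inr ⟨m, hm⟩) := by
  subst h
  show (if h' : (j:ℕ)+1 < q then v (inr ⟨(j:ℕ)+1, h'⟩) else 0) = _
  rw [dif_pos hm]

lemma xmap_inl_zero {p q : ℕ} (v : V p q) (j : Fin p) (h : ¬ ((j:ℕ)+1 < p)) :
    xmap p q v (inl j) = 0 := by
  show (if h' : (j:ℕ)+1 < p then v (inl ⟨(j:ℕ)+1, h'⟩) else 0) = 0
  rw [dif_neg h]

lemma xmap_inr_zero {p q : ℕ} (v : V p q) (j : Fin q) (h : ¬ ((j:ℕ)+1 < q)) :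
    xmap p q v (inr j) = 0 := by
  show (if h' : (j:ℕ)+1 < q then v (inr ⟨(j:ℕ)+1, h'⟩) else 0) = 0
  rw [dif_neg h]

lemma Q0_comm (k : ℕ) (μ : ℂ) (u : V (k+2) k) (hu : u (inl (Fin.last (k+1))) = 0) :
    Q0 k μ (xmap (k+2) k u) = xmap k k (Q0 k μ u) := by
  funext s
  cases s with
  | inl t =>
    have ht := t.isLt
    rw [Q0_apply_inl]
    have e1 : xmap (k+2) k u (inl (t.castSucc.succ : Fin (k+2)))
        = u (inl ⟨(t:ℕ)+2, by omega⟩) :=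
      xmap_inl_eq u _ _ (by omega) (by simp [Fin.val_succ, Fin.coe_castSucc])
    by_cases hc : (t:ℕ)+1 < k
    · rw [e1, xmap_inr_eq u t ((t:ℕ)+1) hc rfl,
        xmap_inl_eq (Q0 k μ u) t ((t:ℕ)+1) hc rfl, Q0_apply_inl]
      rfl
    · rw [e1, xmap_inr_zero u t hc, xmap_inl_zero (Q0 k μ u) t hc]
      have : (⟨(t:ℕ)+2, by omega⟩ : Fin (k+2)) = Fin.last (k+1) := by
        ext; simp only [Fin.val_last]; omega
      rw [this, hu]
      ring
  | inr t =>
    have ht := t.isLt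
    rw [Q0_apply_inr]
    have e1 : xmap (k+2) k u (inl (t.castSucc.succ : Fin (k+2)))
        = u (inl ⟨(t:ℕ)+2, by omega⟩) :=
      xmap_inl_eq u _ _ (by omega) (by simp [Fin.val_succ, Fin.coe_castSucc])
    by_cases hc : (t:ℕ)+1 < k
    · rw [e1, xmap_inr_eq u t ((t:ℕ)+1) hc rfl,
        xmap_inr_eq (Q0 k μ u) t ((t:ℕ)+1) hc rfl, Q0_apply_inr]
      rfl
    · rw [e1, xmap_inr_zero u t hc, xmap_inr_zero (Q0 k μ u) t hc]
      have : (⟨(t:ℕ)+2, by omega⟩ : Fin (k+2)) = Fin.last (k+1) := by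
        ext; simp only [Fin.val_last]; omega
      rw [this, hu]
      ring

lemma Q0_isometry (k : ℕ) (hk : Odd k) (μ : ℂ) (hμ : μ^2 = -2) (u v : V (k+2) k)
    (hu : u (inl (Fin.last (k+1))) = 0) (hv : v (inl (Fin.last (k+1))) = 0) :
    beta k k (Q0 k μ u) (Q0 k μ v) = beta (k+2) k u v := by
  rw [beta_eq, beta_ne (show k+2 ≠ k by omega)]
  have hsign : ∀ i : Fin k, (-1:ℂ) ^ ((Fin.rev i : Fin k):ℕ) * (Q0 k μ u (inr i) * Q0 k μ v (inl i.rev))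
      = (-1:ℂ) ^ (i:ℕ) * (Q0 k μ u (inr i) * Q0 k μ v (inl i.rev)) := by
    intro i; rw [neg_one_pow_rev hk]
  rw [Finset.sum_congr rfl (fun i _ => hsign i), ← Finset.sum_add_distrib]
  rw [Fin.sum_univ_succ, Fin.sum_univ_castSucc]
  have hz1 : (Fin.rev (0 : Fin (k+2))) = Fin.last (k+1) := by ext; simp [Fin.val_rev]
  have hz2 : ((Fin.last k).succ : Fin (k+2)) = Fin.last (k+1) := Fin.succ_last k
  rw [hz1, hz2, hv, hu]
  simp only [mul_zero, zero_mul, add_zero, zero_add, Fin.val_zero, pow_zero, one_mul]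
  rw [← Finset.sum_add_distrib]
  apply Finset.sum_congr rfl
  intro i _
  rw [Q0_apply_inl, Q0_apply_inr, Q0_apply_inl, Q0_apply_inr, rev_succ_castSucc,
    Fin.val_succ, Fin.coe_castSucc]
  linear_combination ((-1:ℂ) ^ (i:ℕ) *
    (u (inl (i.castSucc.succ : Fin (k+2))) * v (inl ((Fin.rev i).castSucc.succ : Fin (k+2)))
      - u (inr i) * v (inr i.rev)) / 2) * hμ

theorem statement5' (k : ℕ) (hk : 1 ≤ k) (hkodd : Odd k) (μ : ℂ) (hμ : μ ^ 2 = -2) :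
    EF (k+2) k 1 0 ≤ orth (k+2) k (EF (k+2) k 1 0) ∧
    orth (k+2) k (EF (k+2) k 1 0) = EF (k+2) k (k+1) k ∧
    (EF (k+2) k 1 0).map (xmap (k+2) k) ≤ EF (k+2) k 1 0 ∧
    (orth (k+2) k (EF (k+2) k 1 0)).map (xmap (k+2) k) ≤ orth (k+2) k (EF (k+2) k 1 0) ∧
    (∃ Q : V (k+2) k →ₗ[ℂ] V k k, QCondIII3 k μ Q) ∧
    (∀ Q : V (k+2) k →ₗ[ℂ] V k k, QCondIII3 k μ Q →
      (∀ u ∈ orth (k+2) k (EF (k+2) k 1 0), Q u = 0 → u ∈ EF (k+2) k 1 0) ∧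
      (∀ w : V k k, ∃ u ∈ orth (k+2) k (EF (k+2) k 1 0), Q u = w) ∧
      (∀ u ∈ orth (k+2) k (EF (k+2) k 1 0), ∀ v ∈ orth (k+2) k (EF (k+2) k 1 0),
        beta k k (Q u) (Q v) = beta (k+2) k u v) ∧
      (∀ u ∈ orth (k+2) k (EF (k+2) k 1 0),
        Q (xmap (k+2) k u) = xmap k k (Q u))) := by
  refine ⟨?_, orth_eq_EF k, ?_, ?_, ⟨Q0 k μ, Q0_cond k μ⟩, ?_⟩
  · rw [orth_eq_EF]
    apply Submodule.span_le.mpr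
    rintro w (⟨i, h1, h2, rfl⟩ | ⟨j, h1, h2, rfl⟩)
    · exact Submodule.subset_span (Or.inl ⟨i, h1, by omega, rfl⟩)
    · omega
  · rw [EF10]
    rw [Submodule.map_span_le]
    rintro w rfl
    rw [xmap_e1]
    exact Submodule.zero_mem _
  · rintro w ⟨v, hv, rfl⟩
    exact (mem_orth_iff k _).2 (xmap_last k v)
  · intro Q hQ
    have hE := Q_eq_Q0 k μ Q hQ
    refine ⟨?_, ?_, ?_, ?_⟩
    · intro u hu h0
      exact Q0_inj k μ hμ u ((mem_orth_iff k u).1 hu) (by rw [← hE u hu]; exact h0)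
    · intro w
      obtain ⟨u, hul, hqu⟩ := Q0_surj k μ hμ w
      have hmem := (mem_orth_iff k u).2 hul
      exact ⟨u, hmem, by rw [hE u hmem]; exact hqu⟩
    · intro u hu v hv
      rw [hE u hu, hE v hv]
      exact Q0_isometry k hkodd μ hμ u v ((mem_orth_iff k u).1 hu) ((mem_orth_iff k v).1 hv)
    · intro u hu
      have hxu := (mem_orth_iff k _).2 (xmap_last k u)
      rw [hE _ hxu, hE u hu, Q0_comm k μ u ((mem_orth_iff k u).1 hu)]

/-- Lemma 3.3(c), case `n-k-2 = k`.  For `λ = (k+2,k)` with `k ≥ 1` odd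
and `W = ⟨e_1⟩`: `W` is isotropic, `W^⊥ = ⟨e_1, …, e_{k+1}, f_1, …, f_k⟩`, `W` and
`W^⊥` are `x_λ`-invariant, and with `μ` a square root of `-2` the map
`Q : W^⊥/W → V_(k,k)` determined by `Q((e_{j+1}+f_j)+W) = μ·e_j`,
`Q((e_{j+1}-f_j)+W) = μ·f_j` is an isomorphism of quadratic spaces satisfying
`Q ∘ x̄_λ = x_ν ∘ Q`. -/
theorem statement5 (k : ℕ) (hk : 1 ≤ k) (hkodd : Odd k) (μ : ℂ) (hμ : μ ^ 2 = -2) :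
    EF (k+2) k 1 0 ≤ orth (k+2) k (EF (k+2) k 1 0) ∧
    orth (k+2) k (EF (k+2) k 1 0) = EF (k+2) k (k+1) k ∧
    (EF (k+2) k 1 0).map (xmap (k+2) k) ≤ EF (k+2) k 1 0 ∧
    (orth (k+2) k (EF (k+2) k 1 0)).map (xmap (k+2) k) ≤ orth (k+2) k (EF (k+2) k 1 0) ∧
    (∃ Q : V (k+2) k →ₗ[ℂ] V k k, QCondIII3 k μ Q) ∧
    (∀ Q : V (k+2) k →ₗ[ℂ] V k k, QCondIII3 k μ Q →
      (∀ u ∈ orth (k+2) k (EF (k+2) k 1 0), Q u = 0 → u ∈ EF (k+2) k 1 0) ∧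
      (∀ w : V k k, ∃ u ∈ orth (k+2) k (EF (k+2) k 1 0), Q u = w) ∧
      (∀ u ∈ orth (k+2) k (EF (k+2) k 1 0), ∀ v ∈ orth (k+2) k (EF (k+2) k 1 0),
        beta k k (Q u) (Q v) = beta (k+2) k u v) ∧
      (∀ u ∈ orth (k+2) k (EF (k+2) k 1 0),
        Q (xmap (k+2) k u) = xmap k k (Q u))) := by
  exact statement5' k hk hkodd μ hμ
end
end

section
/- Let λ = (n−k, k) with n−k and k odd, n−k−2 > k ≥ 1, and n = 2m. Let W = ⟨e_1⟩ ⊆ V_λ. Then W is isotropic for β_λ, W^⊥ = ⟨e_1, …, e_{n−k−1}, f_1, …, f_k⟩, and x_λ(W) ⊆ W, x_λ(W^⊥) ⊆ W^⊥. Moreover, with ν = (n−k−2, k), the linear map Q : W^⊥/W → V_ν determined by Q(e_{j+1} + W) = √−1·e_j for 1 ≤ j ≤ n−k−2 and Q(f_j + W) = f_j for 1 ≤ j ≤ k is a linear isomorphism satisfying β̄_λ(u, v) = β_ν(Q u, Q v) for all u, v ∈ W^⊥/W, and Q ∘ x̄_λ = x_ν ∘ Q. -/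
/-!
In coordinates `β_λ(e_{i+1}, v) = (-1)^i v_{e_{p-i}}`, so `⟨e_1⟩^⊥` is cut out by the vanishing of
the `e_p`-coordinate: it is `⟨e_1, …, e_{p-1}, f_1, …, f_k⟩`, and like every coordinate subspace
of this shape it is `x_λ`-stable because `x_λ` lowers indices. On `W^⊥` every admissible `Q`
agrees with the coordinate map `qmap`, which kills `e_1` and sends `e_{i+1}` to `√-1·e_i`. This
shift changes the sign `(-1)^i` in `β` by one, and the factor `(√-1)^2 = -1` compensates for it,
so `Q` is an isometry; bijectivity and `Q ∘ x̄_λ = x_ν ∘ Q` are read off coordinatewise.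
-/

open Complex Submodule

noncomputable section

/-- The conditions determining the quotient isomorphism `Q^III_4 : W^⊥/W → V_ν`
(`W = ⟨e_1⟩`, `λ = (p,k)` with `p - 2 > k`, `ν = (p-2,k)`):
`Q(e_{j+1} + W) = √-1·e_j` for `1 ≤ j ≤ p-2` and `Q(f_j + W) = f_j` for `1 ≤ j ≤ k`,
encoded on an ambient linear map killing `W`. -/
def QCondIII4 (p k : ℕ) (Q : V p k →ₗ[ℂ] V (p-2) k) : Prop :=
  (∀ j, 1 ≤ j → j ≤ p - 2 → Q (ee p k (j+1)) = Complex.I • ee (p-2) k j) ∧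
  (∀ j, 1 ≤ j → j ≤ k → Q (ff p k j) = ff (p-2) k j) ∧
  (∀ u ∈ EF p k 1 0, Q u = 0)

section

variable {p q : ℕ}

@[simp] lemma ee_inl (i : ℕ) (t : Fin p) :
    ee p q i (Sum.inl t) = if (t : ℕ) + 1 = i then 1 else 0 := rfl
@[simp] lemma ee_inr (i : ℕ) (t : Fin q) : ee p q i (Sum.inr t) = 0 := rfl
@[simp] lemma ff_inl (j : ℕ) (t : Fin p) : ff p q j (Sum.inl t) = 0 := rfl
@[simp] lemma ff_inr (j : ℕ) (t : Fin q) :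
    ff p q j (Sum.inr t) = if (t : ℕ) + 1 = j then 1 else 0 := rfl

@[simp] lemma xmap_inl (v : V p q) (t : Fin p) :
    xmap p q v (Sum.inl t) = if h : (t : ℕ) + 1 < p then v (Sum.inl ⟨t + 1, h⟩) else 0 := rfl
@[simp] lemma xmap_inr (v : V p q) (t : Fin q) :
    xmap p q v (Sum.inr t) = if h : (t : ℕ) + 1 < q then v (Sum.inr ⟨t + 1, h⟩) else 0 := rfl

lemma ee_zero : ee p q 0 = 0 := by
  ext (t | t) <;> simp

lemma ee_succ (i : ℕ) (hi : i < p) : ee p q (i + 1) = Pi.single (Sum.inl ⟨i, hi⟩) 1 := by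
  ext (t | t) <;> simp [Pi.single_apply, Fin.ext_iff]

lemma ff_succ (j : ℕ) (hj : j < q) : ff p q (j + 1) = Pi.single (Sum.inr ⟨j, hj⟩) 1 := by
  ext (t | t) <;> simp [Pi.single_apply, Fin.ext_iff]

lemma mem_EF {r s : ℕ} {v : V p q} :
    v ∈ EF p q r s ↔
      (∀ i : Fin p, r ≤ i → v (Sum.inl i) = 0) ∧ (∀ j : Fin q, s ≤ j → v (Sum.inr j) = 0) := by
  constructor
  · intro hv
    induction hv using span_induction with
    | mem x hx =>
      rcases hx with ⟨i, -, hi, rfl⟩ | ⟨j, -, hj, rfl⟩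
      · exact ⟨fun t ht => if_neg (by omega), fun _ _ => rfl⟩
      · exact ⟨fun _ _ => rfl, fun t ht => if_neg (by omega)⟩
    | zero => exact ⟨fun _ _ => rfl, fun _ _ => rfl⟩
    | add x y _ _ hx hy =>
      exact ⟨fun t ht => by simp [hx.1 t ht, hy.1 t ht],
        fun t ht => by simp [hx.2 t ht, hy.2 t ht]⟩
    | smul c x _ hx =>
      exact ⟨fun t ht => by simp [hx.1 t ht], fun t ht => by simp [hx.2 t ht]⟩
  · rintro ⟨hl, hr⟩
    rw [pi_eq_sum_univ' v]
    refine sum_mem fun s _ => ?_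
    rcases s with i | j
    · by_cases hi : (i : ℕ) < r
      · exact smul_mem _ _ (subset_span (Or.inl ⟨i + 1, by omega, hi, (ee_succ i i.2).symm⟩))
      · simp [hl i (by omega)]
    · by_cases hj : (j : ℕ) < s
      · exact smul_mem _ _ (subset_span (Or.inr ⟨j + 1, by omega, hj, (ff_succ j j.2).symm⟩))
      · simp [hr j (by omega)]

lemma EF_mono {r r' s s' : ℕ} (hr : r ≤ r') (hs : s ≤ s') : EF p q r s ≤ EF p q r' s' :=
  fun _ hv => mem_EF.mpr ⟨fun i hi => (mem_EF.mp hv).1 i (hr.trans hi),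
    fun j hj => (mem_EF.mp hv).2 j (hs.trans hj)⟩

lemma map_xmap_EF_le {r s : ℕ} : (EF p q r s).map (xmap p q) ≤ EF p q r s := by
  rintro _ ⟨u, hu, rfl⟩
  obtain ⟨hl, hr⟩ := mem_EF.mp hu
  refine mem_EF.mpr ⟨fun i hi => ?_, fun j hj => ?_⟩
  · rw [xmap_inl]; split_ifs
    exacts [hl _ (by simp; omega), rfl]
  · rw [xmap_inr]; split_ifs
    exacts [hr _ (by simp; omega), rfl]

lemma beta_ee_succ (hpq : p ≠ q) (i : ℕ) (hi : i < p) (v : V p q) :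
    beta p q (ee p q (i + 1)) v = (-1) ^ i * v (Sum.inl ⟨p - 1 - i, by omega⟩) := by
  rw [beta, Matrix.toLinearMap₂'_apply', ee_succ i hi, single_dotProduct, one_mul,
    Matrix.mulVec, dotProduct, Fintype.sum_sum_type]
  simp only [gram, hpq, if_false, Nat.reduceEqDiff, ite_mul, zero_mul, Finset.sum_const_zero,
    add_zero]
  rw [Finset.sum_eq_single ⟨p - 1 - i, by omega⟩
    (fun x _ hx => if_neg fun h => hx (Fin.ext (by simp; omega))) (by simp),
    if_pos (by simp; omega)]

lemma beta_ff_succ (hpq : p ≠ q) (j : ℕ) (hj : j < q) (v : V p q) :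
    beta p q (ff p q (j + 1)) v = (-1) ^ j * v (Sum.inr ⟨q - 1 - j, by omega⟩) := by
  rw [beta, Matrix.toLinearMap₂'_apply', ff_succ j hj, single_dotProduct, one_mul,
    Matrix.mulVec, dotProduct, Fintype.sum_sum_type]
  simp only [gram, hpq, if_false, Nat.reduceEqDiff, ite_mul, zero_mul, Finset.sum_const_zero,
    zero_add]
  rw [Finset.sum_eq_single ⟨q - 1 - j, by omega⟩
    (fun x _ hx => if_neg fun h => hx (Fin.ext (by simp; omega))) (by simp),
    if_pos (by simp; omega)]

lemma EF_one_zero : EF p q 1 0 = ℂ ∙ ee p q 1 := by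
  rw [EF]
  congr
  ext v
  simp only [Set.mem_union, Set.mem_ofPred_eq, Set.mem_singleton_iff]
  constructor
  · rintro (⟨i, h1, h2, rfl⟩ | ⟨j, h1, h2, -⟩)
    · rw [le_antisymm h2 h1]
    · omega
  · rintro rfl
    exact Or.inl ⟨1, le_rfl, le_rfl, rfl⟩

lemma mem_orth_EF_one_zero (hpq : p ≠ q) (hp : 0 < p) {u : V p q} :
    u ∈ orth p q (EF p q 1 0) ↔ u (Sum.inl ⟨p - 1, by omega⟩) = 0 := by
  rw [orth, EF_one_zero, LinearMap.BilinForm.orthogonal_span_singleton_eq_toLin_ker,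
    LinearMap.mem_ker]
  change beta p q (ee p q (0 + 1)) u = 0 ↔ _
  simp [beta_ee_succ hpq 0 hp]

lemma orth_EF_one_zero (hpq : p ≠ q) (hp : 0 < p) :
    orth p q (EF p q 1 0) = EF p q (p - 1) q := by
  ext u
  rw [mem_orth_EF_one_zero hpq hp, mem_EF]
  refine ⟨fun h => ⟨fun i hi => ?_, fun j hj => absurd j.2 (by omega)⟩,
    fun h => h.1 _ le_rfl⟩
  rwa [show i = ⟨p - 1, by omega⟩ from Fin.ext (by have := i.2; simp; omega)]

def qmap (p q : ℕ) : V p q →ₗ[ℂ] V (p - 2) q where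
  toFun v := Sum.elim (fun i => I * v (Sum.inl ⟨i + 1, by omega⟩)) (fun j => v (Sum.inr j))
  map_add' u v := by ext (i | j) <;> simp [mul_add]
  map_smul' c v := by ext (i | j) <;> simp [mul_left_comm]

@[simp] lemma qmap_inl (v : V p q) (i : Fin (p - 2)) :
    qmap p q v (Sum.inl i) = I * v (Sum.inl ⟨i + 1, by omega⟩) := rfl
@[simp] lemma qmap_inr (v : V p q) (j : Fin q) : qmap p q v (Sum.inr j) = v (Sum.inr j) := rfl

lemma qmap_ee_succ (i : ℕ) : qmap p q (ee p q (i + 1)) = I • ee (p - 2) q i := by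
  ext (t | t) <;> simp

lemma qmap_ff (j : ℕ) : qmap p q (ff p q j) = ff (p - 2) q j := by
  ext (t | t) <;> simp

lemma qmap_condIII4 {k : ℕ} : QCondIII4 p k (qmap p k) := by
  refine ⟨fun j _ _ => qmap_ee_succ j, fun j _ _ => qmap_ff j, fun u hu => ?_⟩
  obtain ⟨hl, hr⟩ := mem_EF.mp hu
  ext (i | j)
  · simp [hl ⟨i + 1, by omega⟩ (by simp)]
  · simp [hr j (Nat.zero_le _)]

lemma QCondIII4.eqOn_EF {k : ℕ} {Q : V p k →ₗ[ℂ] V (p - 2) k} (hQ : QCondIII4 p k Q) :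
    Set.EqOn Q (qmap p k) (EF p k (p - 1) k) := by
  refine LinearMap.eqOn_span' ?_
  rintro _ (⟨_ | _ | i, h1, h2, rfl⟩ | ⟨j, h1, h2, rfl⟩)
  · omega
  · rw [hQ.2.2 _ (subset_span (Or.inl ⟨1, le_rfl, le_rfl, rfl⟩)), qmap_ee_succ, ee_zero,
      smul_zero]
  · rw [hQ.1 (i + 1) (by omega) (by omega), qmap_ee_succ]
  · rw [hQ.2.1 j h1 h2, qmap_ff]

lemma mem_EF_one_zero_of_qmap_eq_zero {u : V p q} (hu : u ∈ EF p q (p - 1) q)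
    (h : qmap p q u = 0) : u ∈ EF p q 1 0 := by
  refine mem_EF.mpr ⟨fun i hi => ?_, fun j _ => by simpa using congr_fun h (Sum.inr j)⟩
  by_cases hip : (i : ℕ) < p - 1
  · have := congr_fun h (Sum.inl ⟨i - 1, by omega⟩)
    simp only [qmap_inl, Pi.zero_apply, mul_eq_zero, I_ne_zero, false_or] at this
    rwa [show i = ⟨i - 1 + 1, by omega⟩ from Fin.ext (by simp; omega)]
  · exact (mem_EF.mp hu).1 i (by omega)

lemma exists_mem_EF_qmap_eq (w : V (p - 2) q) : ∃ u ∈ EF p q (p - 1) q, qmap p q u = w := by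
  refine ⟨Sum.elim (fun i => if h : 0 < (i : ℕ) ∧ (i : ℕ) < p - 1
    then -I * w (Sum.inl ⟨i - 1, by omega⟩) else 0) (fun j => w (Sum.inr j)), ?_, ?_⟩
  · exact mem_EF.mpr ⟨fun i hi => dif_neg (by omega), fun j hj => absurd j.2 (by omega)⟩
  · ext (i | j)
    · simp [show (i : ℕ) + 1 < p - 1 by omega, ← mul_assoc]
    · rfl

lemma beta_qmap (hpq : p ≠ q) (hpq' : p - 2 ≠ q) {u v : V p q} (hu : u ∈ EF p q (p - 1) q)
    (hv : v ∈ EF p q (p - 1) q) :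
    beta (p - 2) q (qmap p q u) (qmap p q v) = beta p q u v := by
  obtain ⟨hvl, -⟩ := mem_EF.mp hv
  refine LinearMap.eqOn_span' (f := (beta (p - 2) q).flip (qmap p q v) ∘ₗ qmap p q)
    (g := (beta p q).flip v) ?_ hu
  rintro _ (⟨_ | _ | i, h1, h2, rfl⟩ | ⟨_ | j, h1, h2, rfl⟩)
  · omega
  · simpa [qmap_ee_succ, ee_zero, beta_ee_succ hpq 0 (by omega)] using (hvl _ le_rfl).symm
  · change beta (p - 2) q (qmap p q (ee p q (i + 1 + 1))) (qmap p q v) =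
      beta p q (ee p q (i + 1 + 1)) v
    rw [qmap_ee_succ, map_smul, LinearMap.smul_apply, beta_ee_succ hpq' i (by omega),
      beta_ee_succ hpq (i + 1) (by omega), qmap_inl, smul_eq_mul]
    simp only [show p - 2 - 1 - i + 1 = p - 1 - (i + 1) by omega]
    ring_nf
    rw [I_sq]
    ring
  · omega
  · simp [qmap_ff, beta_ff_succ hpq' j (by omega), beta_ff_succ hpq j (by omega)]

lemma qmap_xmap {u : V p q} (hu : u ∈ EF p q (p - 1) q) :
    qmap p q (xmap p q u) = xmap (p - 2) q (qmap p q u) := by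
  obtain ⟨hl, -⟩ := mem_EF.mp hu
  ext (i | j)
  · have := i.2
    simp only [qmap_inl, xmap_inl, dif_pos (by omega : (i : ℕ) + 1 + 1 < p)]
    split_ifs
    · rfl
    · rw [hl _ (by simp; omega), mul_zero]
  · simp

end

/-- Here `p` plays the role of `n - k`. -/
theorem statement6_general (p k : ℕ) (hgt : k + 2 < p) :
    EF p k 1 0 ≤ orth p k (EF p k 1 0) ∧
    orth p k (EF p k 1 0) = EF p k (p-1) k ∧
    (EF p k 1 0).map (xmap p k) ≤ EF p k 1 0 ∧
    (orth p k (EF p k 1 0)).map (xmap p k) ≤ orth p k (EF p k 1 0) ∧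
    (∃ Q : V p k →ₗ[ℂ] V (p-2) k, QCondIII4 p k Q) ∧
    (∀ Q : V p k →ₗ[ℂ] V (p-2) k, QCondIII4 p k Q →
      (∀ u ∈ orth p k (EF p k 1 0), Q u = 0 → u ∈ EF p k 1 0) ∧
      (∀ w : V (p-2) k, ∃ u ∈ orth p k (EF p k 1 0), Q u = w) ∧
      (∀ u ∈ orth p k (EF p k 1 0), ∀ v ∈ orth p k (EF p k 1 0),
        beta (p-2) k (Q u) (Q v) = beta p k u v) ∧
      (∀ u ∈ orth p k (EF p k 1 0),
        Q (xmap p k u) = xmap (p-2) k (Q u))) := by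
  have horth : orth p k (EF p k 1 0) = EF p k (p - 1) k := orth_EF_one_zero (by omega) (by omega)
  rw [horth]
  refine ⟨EF_mono (by omega) (Nat.zero_le _), rfl, map_xmap_EF_le, map_xmap_EF_le,
    ⟨qmap p k, qmap_condIII4⟩, fun Q hQ => ⟨fun u hu hQu => ?_, fun w => ?_,
      fun u hu v hv => ?_, fun u hu => ?_⟩⟩
  · exact mem_EF_one_zero_of_qmap_eq_zero hu (hQ.eqOn_EF hu ▸ hQu)
  · obtain ⟨u, hu, rfl⟩ := exists_mem_EF_qmap_eq w
    exact ⟨u, hu, hQ.eqOn_EF hu⟩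
  · rw [hQ.eqOn_EF hu, hQ.eqOn_EF hv, beta_qmap (by omega) (by omega) hu hv]
  · rw [hQ.eqOn_EF (map_xmap_EF_le ⟨u, hu, rfl⟩), hQ.eqOn_EF hu, qmap_xmap hu]

/-- Lemma 3.3(c), case `n-k-2 > k`.  For `λ = (n-k,k)` with `n-k`, `k`
odd, `n-k-2 > k ≥ 1`, `n = 2m`, and `W = ⟨e_1⟩`: `W` is isotropic,
`W^⊥ = ⟨e_1, …, e_{n-k-1}, f_1, …, f_k⟩`, `W` and `W^⊥` are `x_λ`-invariant, and the
map `Q : W^⊥/W → V_(n-k-2,k)` determined by `Q(e_{j+1}+W) = √-1·e_j`,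
`Q(f_j+W) = f_j` is an isomorphism of quadratic spaces satisfying
`Q ∘ x̄_λ = x_ν ∘ Q`.  Here `p` plays the role of `n - k`. -/
theorem statement6 (p k m : ℕ) (hpodd : Odd p) (hkodd : Odd k) (hk : 1 ≤ k)
    (hgt : k + 2 < p) (hn : p + k = 2 * m) :
    EF p k 1 0 ≤ orth p k (EF p k 1 0) ∧
    orth p k (EF p k 1 0) = EF p k (p-1) k ∧
    (EF p k 1 0).map (xmap p k) ≤ EF p k 1 0 ∧
    (orth p k (EF p k 1 0)).map (xmap p k) ≤ orth p k (EF p k 1 0) ∧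
    (∃ Q : V p k →ₗ[ℂ] V (p-2) k, QCondIII4 p k Q) ∧
    (∀ Q : V p k →ₗ[ℂ] V (p-2) k, QCondIII4 p k Q →
      (∀ u ∈ orth p k (EF p k 1 0), Q u = 0 → u ∈ EF p k 1 0) ∧
      (∀ w : V (p-2) k, ∃ u ∈ orth p k (EF p k 1 0), Q u = w) ∧
      (∀ u ∈ orth p k (EF p k 1 0), ∀ v ∈ orth p k (EF p k 1 0),
        beta (p-2) k (Q u) (Q v) = beta p k u v) ∧
      (∀ u ∈ orth p k (EF p k 1 0),
        Q (xmap p k u) = xmap (p-2) k (Q u))) :=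
  statement6_general p k hgt
end
end

section
/- Let n = 2m, λ = (n−k, k), and let ν = (n′−k′, k′) be a two-row partition of n′ = n − 2ℓ for some 1 ≤ ℓ < m. Let W ⊆ V_λ be an ℓ-dimensional isotropic subspace with x_λ(W) ⊆ W (and hence x_λ(W^⊥) ⊆ W^⊥, since β_λ(x_λ u, v) = −β_λ(u, x_λ v) for all u, v). Let Q : W^⊥/W → V_ν be a linear isomorphism satisfying β̄_λ(u, v) = β_ν(Q u, Q v) for all u, v ∈ W^⊥/W and Q ∘ x̄_λ = x_ν ∘ Q. Let F_• be a complete isotropic flag in (V_λ, β_λ) lying in the Springer fiber of x_λ, with F_ℓ = W. Then W ⊆ F_{ℓ+i} ⊆ W^⊥ for 0 ≤ i ≤ m−ℓ, and the chain F″_• defined by F″_i = Q(F_{ℓ+i}/W) for 0 ≤ i ≤ m−ℓ and F″_i = (F″_{n′−i})^⊥ (orthogonal complement with respect to β_ν) for m−ℓ < i ≤ n′ is a complete isotropic flag in (V_ν, β_ν) lying in the Springer fiber of x_ν. -/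
open Complex Submodule

noncomputable section

section Helpers

lemma neg_one_pow_par {a b : ℕ} (h : a % 2 = b % 2) : ((-1:ℂ))^a = (-1)^b := by
  conv_lhs => rw [← Nat.div_add_mod a 2]
  conv_rhs => rw [← Nat.div_add_mod b 2]
  rw [pow_add, pow_add, pow_mul, pow_mul, h]
  norm_num

lemma finrank_V (p q : ℕ) : Module.finrank ℂ (V p q) = p + q := by
  simp [Module.finrank_pi]

lemma beta_apply (p q : ℕ) (u v : V p q) :
    beta p q u v = ∑ s, ∑ t, u s * (v t * gram p q s t) := by
  rw [beta, Matrix.toLinearMap₂'_apply]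
  simp [smul_eq_mul]

lemma gram_ll (p q : ℕ) (i j : Fin p) : gram p q (Sum.inl i) (Sum.inl j) =
    if p = q then 0 else if (i : ℕ) + (j : ℕ) + 2 = p + 1 then (-1 : ℂ) ^ (i : ℕ) else 0 := rfl
lemma gram_lr (p q : ℕ) (i : Fin p) (j : Fin q) : gram p q (Sum.inl i) (Sum.inr j) =
    if p = q then (if (i : ℕ) + (j : ℕ) + 2 = p + 1 then (-1 : ℂ) ^ (i : ℕ) else 0) else 0 := rfl
lemma gram_rl (p q : ℕ) (i : Fin q) (j : Fin p) : gram p q (Sum.inr i) (Sum.inl j) =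
    if p = q then (if (j : ℕ) + (i : ℕ) + 2 = p + 1 then (-1 : ℂ) ^ (j : ℕ) else 0) else 0 := rfl
lemma gram_rr (p q : ℕ) (i j : Fin q) : gram p q (Sum.inr i) (Sum.inr j) =
    if p = q then 0 else if (i : ℕ) + (j : ℕ) + 2 = q + 1 then (-1 : ℂ) ^ (i : ℕ) else 0 := rfl

end Helpers
lemma gram_flip (p q : ℕ) (hpar : p % 2 = q % 2) (s t : Fin p ⊕ Fin q) :
    gram p q s t = (if p = q then 1 else (-1:ℂ)^(p+1)) * gram p q t s := by
  by_cases hpq : p = q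
  · simp only [if_pos hpq, one_mul]
    cases s <;> cases t <;> simp only [gram_ll, gram_lr, gram_rl, gram_rr, if_pos hpq]
  · simp only [if_neg hpq]
    cases s <;> cases t <;> simp only [gram_ll, gram_lr, gram_rl, gram_rr, if_neg hpq] <;>
      [skip; exact (mul_zero _).symm; exact (mul_zero _).symm; skip] <;>
      · split_ifs with h1 h2 <;> first
          | (rw [← pow_add]; exact neg_one_pow_par (by omega))
          | omega
          | (exact (mul_zero _).symm)
lemma beta_flip (p q : ℕ) (hpar : p % 2 = q % 2) (u v : V p q) :
    beta p q u v = (if p = q then 1 else (-1:ℂ)^(p+1)) * beta p q v u := by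
  rw [beta_apply, beta_apply, Finset.mul_sum, Finset.sum_comm]
  refine Finset.sum_congr rfl fun t _ => ?_
  rw [Finset.mul_sum]
  refine Finset.sum_congr rfl fun s _ => ?_
  rw [gram_flip p q hpar s t]; ring

lemma beta_refl (p q : ℕ) (hpar : p % 2 = q % 2) : (beta p q).IsRefl := fun u v h => by
  rw [beta_flip p q hpar v u, h, mul_zero]

lemma beta_single_right (p q : ℕ) (u : V p q) (t : Fin p ⊕ Fin q) :
    beta p q u (Pi.single t 1) = ∑ s, u s * gram p q s t := by
  rw [beta_apply]
  refine Finset.sum_congr rfl fun s _ => ?_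
  rw [Fintype.sum_eq_single t (fun t' ht' => by simp [Pi.single_apply, ht'])]
  simp
lemma beta_nondeg (p q : ℕ) : (beta p q).Nondegenerate := by
  refine LinearMap.BilinForm.Nondegenerate.ofSeparatingLeft ?_
  intro u hu
  have key : ∀ t, ∑ s, u s * gram p q s t = 0 := fun t => by
    rw [← beta_single_right]; exact hu _
  have hne : ∀ n : ℕ, ((-1:ℂ))^n ≠ 0 := fun n => pow_ne_zero _ (by norm_num)
  funext s0
  show u s0 = 0
  by_cases hpq : p = q
  · cases s0 with
    | inl i =>
      have hi := i.isLt
      have hlt : p - 1 - (i:ℕ) < q := by omega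
      have hside : ∀ s, s ≠ Sum.inl i → u s * gram p q s (Sum.inr ⟨p - 1 - (i:ℕ), hlt⟩) = 0 := by
        rintro (i' | j) hs
        · have hne2 : (i':ℕ) ≠ (i:ℕ) := fun hc => hs (congrArg Sum.inl (Fin.ext hc))
          rw [gram_lr, if_pos hpq, if_neg (by simp only [Fin.val_mk]; omega), mul_zero]
        · rw [gram_rr, if_pos hpq, mul_zero]
      have h := key (Sum.inr ⟨p - 1 - (i:ℕ), hlt⟩)
      rw [Fintype.sum_eq_single (Sum.inl i) hside, gram_lr, if_pos hpq,
        if_pos (by simp only [Fin.val_mk]; omega)] at h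
      exact (mul_eq_zero.mp h).resolve_right (hne _)
    | inr i =>
      have hi := i.isLt
      have hlt : q - 1 - (i:ℕ) < p := by omega
      have hside : ∀ s, s ≠ Sum.inr i → u s * gram p q s (Sum.inl ⟨q - 1 - (i:ℕ), hlt⟩) = 0 := by
        rintro (i' | j) hs
        · rw [gram_ll, if_pos hpq, mul_zero]
        · have hne2 : (j:ℕ) ≠ (i:ℕ) := fun hc => hs (congrArg Sum.inr (Fin.ext hc))
          have hj := j.isLt
          rw [gram_rl, if_pos hpq, if_neg (by simp only [Fin.val_mk]; omega), mul_zero]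
      have h := key (Sum.inl ⟨q - 1 - (i:ℕ), hlt⟩)
      rw [Fintype.sum_eq_single (Sum.inr i) hside, gram_rl, if_pos hpq,
        if_pos (by simp only [Fin.val_mk]; omega)] at h
      exact (mul_eq_zero.mp h).resolve_right (hne _)
  · cases s0 with
    | inl i =>
      have hi := i.isLt
      have hlt : p - 1 - (i:ℕ) < p := by omega
      have hside : ∀ s, s ≠ Sum.inl i → u s * gram p q s (Sum.inl ⟨p - 1 - (i:ℕ), hlt⟩) = 0 := by
        rintro (i' | j) hs
        · have hne2 : (i':ℕ) ≠ (i:ℕ) := fun hc => hs (congrArg Sum.inl (Fin.ext hc))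
          have hi' := i'.isLt
          rw [gram_ll, if_neg hpq, if_neg (by simp only [Fin.val_mk]; omega), mul_zero]
        · rw [gram_rl, if_neg hpq, mul_zero]
      have h := key (Sum.inl ⟨p - 1 - (i:ℕ), hlt⟩)
      rw [Fintype.sum_eq_single (Sum.inl i) hside, gram_ll, if_neg hpq,
        if_pos (by simp only [Fin.val_mk]; omega)] at h
      exact (mul_eq_zero.mp h).resolve_right (hne _)
    | inr i =>
      have hi := i.isLt
      have hlt : q - 1 - (i:ℕ) < q := by omega
      have hside : ∀ s, s ≠ Sum.inr i → u s * gram p q s (Sum.inr ⟨q - 1 - (i:ℕ), hlt⟩) = 0 := by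
        rintro (i' | j) hs
        · rw [gram_lr, if_neg hpq, mul_zero]
        · have hne2 : (j:ℕ) ≠ (i:ℕ) := fun hc => hs (congrArg Sum.inr (Fin.ext hc))
          have hj := j.isLt
          rw [gram_rr, if_neg hpq, if_neg (by simp only [Fin.val_mk]; omega), mul_zero]
      have h := key (Sum.inr ⟨q - 1 - (i:ℕ), hlt⟩)
      rw [Fintype.sum_eq_single (Sum.inr i) hside, gram_rr, if_neg hpq,
        if_pos (by simp only [Fin.val_mk]; omega)] at h
      exact (mul_eq_zero.mp h).resolve_right (hne _)
lemma beta_single_single (p q : ℕ) (s t : Fin p ⊕ Fin q) :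
    beta p q (Pi.single s 1) (Pi.single t 1) = gram p q s t := by
  rw [beta_single_right, Fintype.sum_eq_single s (fun s' hs' => by simp [Pi.single_apply, hs'])]
  simp

lemma xmap_single_l (p q : ℕ) (i : Fin p) :
    xmap p q (Pi.single (Sum.inl i) (1:ℂ)) =
      if h : 1 ≤ (i:ℕ) then Pi.single (Sum.inl (⟨(i:ℕ)-1, by omega⟩ : Fin p)) (1:ℂ) else 0 := by
  have hi := i.isLt
  funext s
  simp only [xmap, LinearMap.coe_mk, AddHom.coe_mk]
  by_cases h : 1 ≤ (i:ℕ)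
  · rw [dif_pos h]
    cases s with
    | inl j =>
      simp only [Sum.elim_inl, Pi.single_apply, Sum.inl.injEq, Fin.ext_iff, Fin.val_mk]
      split_ifs <;> first | rfl | omega
    | inr j =>
      simp only [Sum.elim_inr, Pi.single_apply]
      split_ifs <;> simp_all
  · rw [dif_neg h]
    cases s with
    | inl j =>
      simp only [Sum.elim_inl, Pi.single_apply, Sum.inl.injEq, Fin.ext_iff, Fin.val_mk,
        Pi.zero_apply]
      split_ifs <;> first | rfl | omega
    | inr j =>
      simp only [Sum.elim_inr, Pi.single_apply, Pi.zero_apply]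
      split_ifs <;> simp_all

lemma xmap_single_r (p q : ℕ) (i : Fin q) :
    xmap p q (Pi.single (Sum.inr i) (1:ℂ)) =
      if h : 1 ≤ (i:ℕ) then Pi.single (Sum.inr (⟨(i:ℕ)-1, by omega⟩ : Fin q)) (1:ℂ) else 0 := by
  have hi := i.isLt
  funext s
  simp only [xmap, LinearMap.coe_mk, AddHom.coe_mk]
  by_cases h : 1 ≤ (i:ℕ)
  · rw [dif_pos h]
    cases s with
    | inl j =>
      simp only [Sum.elim_inl, Pi.single_apply]
      split_ifs <;> simp_all
    | inr j =>
      simp only [Sum.elim_inr, Pi.single_apply, Sum.inr.injEq, Fin.ext_iff, Fin.val_mk]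
      split_ifs <;> first | rfl | omega
  · rw [dif_neg h]
    cases s with
    | inl j =>
      simp only [Sum.elim_inl, Pi.single_apply, Pi.zero_apply]
      split_ifs <;> simp_all
    | inr j =>
      simp only [Sum.elim_inr, Pi.single_apply, Sum.inr.injEq, Fin.ext_iff, Fin.val_mk,
        Pi.zero_apply]
      split_ifs <;> first | rfl | omega

lemma neg_pow_pred {a : ℕ} (h : 1 ≤ a) : ((-1:ℂ))^(a-1) + (-1)^a = 0 := by
  obtain ⟨b, rfl⟩ := Nat.exists_eq_add_of_le h
  simp only [Nat.add_sub_cancel_left]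
  rw [show 1 + b = b + 1 by ring, pow_succ]
  ring
lemma beta_x_single (p q : ℕ) (s t : Fin p ⊕ Fin q) :
    beta p q (xmap p q (Pi.single s 1)) (Pi.single t 1)
      = - beta p q (Pi.single s 1) (xmap p q (Pi.single t 1)) := by
  cases s with
  | inl i =>
    have hi := i.isLt
    cases t with
    | inl j =>
      have hj := j.isLt
      rw [xmap_single_l, xmap_single_l]
      by_cases h1 : 1 ≤ (i:ℕ) <;> by_cases h2 : 1 ≤ (j:ℕ) <;>
        simp only [dif_pos, dif_neg, h1, h2, dite_true, dite_false, map_zero,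
          LinearMap.zero_apply, beta_single_single, gram_ll, Fin.val_mk, neg_zero] <;>
        by_cases hpq : p = q <;> simp only [if_pos, if_neg, hpq, ite_true, ite_false, neg_zero] <;>
        split_ifs <;> first
          | omega
          | (linear_combination (neg_pow_pred h1))
          | (linear_combination (neg_pow_pred h2))
          | (linear_combination -(neg_pow_pred h1))
          | (linear_combination -(neg_pow_pred h2))
          | norm_num
    | inr j =>
      have hj := j.isLt
      rw [xmap_single_l, xmap_single_r]
      by_cases h1 : 1 ≤ (i:ℕ) <;> by_cases h2 : 1 ≤ (j:ℕ) <;>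
        simp only [dif_pos, dif_neg, h1, h2, dite_true, dite_false, map_zero,
          LinearMap.zero_apply, beta_single_single, gram_lr, Fin.val_mk, neg_zero] <;>
        by_cases hpq : p = q <;> simp only [if_pos, if_neg, hpq, ite_true, ite_false, neg_zero] <;>
        split_ifs <;> first
          | omega
          | (linear_combination (neg_pow_pred h1))
          | (linear_combination (neg_pow_pred h2))
          | (linear_combination -(neg_pow_pred h1))
          | (linear_combination -(neg_pow_pred h2))
          | norm_num
  | inr i =>
    have hi := i.isLt
    cases t with
    | inl j =>
      have hj := j.isLt
      rw [xmap_single_r, xmap_single_l]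
      by_cases h1 : 1 ≤ (i:ℕ) <;> by_cases h2 : 1 ≤ (j:ℕ) <;>
        simp only [dif_pos, dif_neg, h1, h2, dite_true, dite_false, map_zero,
          LinearMap.zero_apply, beta_single_single, gram_rl, Fin.val_mk, neg_zero] <;>
        by_cases hpq : p = q <;> simp only [if_pos, if_neg, hpq, ite_true, ite_false, neg_zero] <;>
        split_ifs <;> first
          | omega
          | (linear_combination (neg_pow_pred h1))
          | (linear_combination (neg_pow_pred h2))
          | (linear_combination -(neg_pow_pred h1))
          | (linear_combination -(neg_pow_pred h2))
          | norm_num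
    | inr j =>
      have hj := j.isLt
      rw [xmap_single_r, xmap_single_r]
      by_cases h1 : 1 ≤ (i:ℕ) <;> by_cases h2 : 1 ≤ (j:ℕ) <;>
        simp only [dif_pos, dif_neg, h1, h2, dite_true, dite_false, map_zero,
          LinearMap.zero_apply, beta_single_single, gram_rr, Fin.val_mk, neg_zero] <;>
        by_cases hpq : p = q <;> simp only [if_pos, if_neg, hpq, ite_true, ite_false, neg_zero] <;>
        split_ifs <;> first
          | omega
          | (linear_combination (neg_pow_pred h1))
          | (linear_combination (neg_pow_pred h2))
          | (linear_combination -(neg_pow_pred h1))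
          | (linear_combination -(neg_pow_pred h2))
          | norm_num

lemma beta_x (p q : ℕ) (u v : V p q) :
    beta p q (xmap p q u) v = - beta p q u (xmap p q v) := by
  have key : ∀ s t : Fin p ⊕ Fin q,
      beta p q (xmap p q (Pi.single s (u s))) (Pi.single t (v t))
        = - beta p q (Pi.single s (u s)) (xmap p q (Pi.single t (v t))) := by
    intro s t
    have e1 : (Pi.single s (u s) : V p q) = u s • (Pi.single s (1:ℂ) : V p q) := by
      rw [← Pi.single_smul, smul_eq_mul, mul_one]
    have e2 : (Pi.single t (v t) : V p q) = v t • (Pi.single t (1:ℂ) : V p q) := by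
      rw [← Pi.single_smul, smul_eq_mul, mul_one]
    rw [e1, e2, map_smul, map_smul, map_smul, map_smul, LinearMap.smul_apply,
      LinearMap.smul_apply, map_smul, map_smul, beta_x_single]
    simp only [smul_eq_mul]
    ring
  conv_lhs => rw [← Finset.univ_sum_single u, ← Finset.univ_sum_single v]
  conv_rhs => rw [← Finset.univ_sum_single u, ← Finset.univ_sum_single v]
  simp only [map_sum, LinearMap.sum_apply, LinearMap.coe_sum, Finset.sum_apply]
  rw [← Finset.sum_neg_distrib]
  refine Finset.sum_congr rfl fun s _ => ?_
  rw [← Finset.sum_neg_distrib]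
  exact Finset.sum_congr rfl fun t _ => key t s
lemma finrank_map_add {K V₁ V₂ : Type*} [Field K] [AddCommGroup V₁] [Module K V₁]
    [FiniteDimensional K V₁] [AddCommGroup V₂] [Module K V₂] (f : V₁ →ₗ[K] V₂)
    (N : Submodule K V₁) :
    Module.finrank K (N.map f) + Module.finrank K (N ⊓ LinearMap.ker f : Submodule K V₁)
      = Module.finrank K N := by
  have h := LinearMap.finrank_range_add_finrank_ker (f.domRestrict N)
  rw [LinearMap.range_domRestrict, LinearMap.ker_domRestrict] at h
  have e : Submodule.comap N.subtype (LinearMap.ker f)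
      = Submodule.comap N.subtype (N ⊓ LinearMap.ker f) := by
    ext x; simp [x.2]
  rw [e, (Submodule.comapSubtypeEquivOfLe
    (inf_le_left : N ⊓ LinearMap.ker f ≤ N)).finrank_eq] at h
  exact h

lemma mem_orth_iff_s7 (p q : ℕ) (N : Submodule ℂ (V p q)) (v : V p q) :
    v ∈ orth p q N ↔ ∀ w ∈ N, beta p q w v = 0 := Iff.rfl

lemma orth_mono (p q : ℕ) {N M : Submodule ℂ (V p q)} (h : N ≤ M) :
    orth p q M ≤ orth p q N :=
  LinearMap.BilinForm.orthogonal_le h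

lemma orth_bot (p q : ℕ) : orth p q ⊥ = ⊤ := by
  rw [eq_top_iff]
  intro v _
  rw [mem_orth_iff_s7]
  intro w hw
  rw [Submodule.mem_bot] at hw
  simp [hw]

lemma finrank_orth (p q : ℕ) (hpar : p % 2 = q % 2) (N : Submodule ℂ (V p q)) :
    Module.finrank ℂ (orth p q N) = p + q - Module.finrank ℂ N := by
  rw [orth, LinearMap.BilinForm.finrank_orthogonal (beta_nondeg p q),
    finrank_V]

lemma orth_orth (p q : ℕ) (hpar : p % 2 = q % 2) (N : Submodule ℂ (V p q)) :
    orth p q (orth p q N) = N :=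
  LinearMap.BilinForm.orthogonal_orthogonal (beta_nondeg p q) (beta_refl p q hpar) N

/-- Corollary 3.4.  Let `λ = (n-k,k)`, `n = 2m`, and let
`ν = (p', k')` be a two-row partition of `n' = n - 2l`, `1 ≤ l < m`.  Let `W` be an
`l`-dimensional isotropic `x_λ`-invariant subspace, and let `Q` be (an ambient
representative of) a linear isomorphism `W^⊥/W → V_ν` compatible with the induced
bilinear form and with the induced nilpotent `x̄_λ`.  If `F` is a complete isotropic
flag in the Springer fiber of `x_λ` with `F_l = W`, then `W ⊆ F_{l+i} ⊆ W^⊥` for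
`0 ≤ i ≤ m - l`, and the induced chain `F''` (given by `F''_i = Q(F_{l+i}/W)` for
`i ≤ m - l` and completed by orthogonal complements) is a complete isotropic flag
lying in the Springer fiber of `x_ν`.  Here `p` plays the role of `n - k`. -/
theorem statement7 (p k m l p' k' : ℕ) (hn : p + k = 2 * m) (hk : k ≤ p) (hk' : k' ≤ p')
    (hn' : p' + k' = p + k - 2 * l) (hl1 : 1 ≤ l) (hl2 : l < m)
    (W : Submodule ℂ (V p k)) (hWdim : Module.finrank ℂ W = l)
    (hWiso : W ≤ orth p k W) (hWx : W.map (xmap p k) ≤ W)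
    (Q : V p k →ₗ[ℂ] V p' k')
    (hQ0 : ∀ u ∈ W, Q u = 0)
    (hQker : ∀ u ∈ orth p k W, Q u = 0 → u ∈ W)
    (hQsurj : ∀ w : V p' k', ∃ u ∈ orth p k W, Q u = w)
    (hQform : ∀ u ∈ orth p k W, ∀ v ∈ orth p k W,
      beta p' k' (Q u) (Q v) = beta p k u v)
    (hQx : ∀ u ∈ orth p k W, Q (xmap p k u) = xmap p' k' (Q u))
    (F : ℕ → Submodule ℂ (V p k)) (hF : IsFlag p k F) (hSp : InSpringer p k F)
    (hFl : F l = W) :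
    (∀ i ≤ m - l, W ≤ F (l + i) ∧ F (l + i) ≤ orth p k W) ∧
    IsFlag p' k' (Qflag p k p' k' l W Q F) ∧
    InSpringer p' k' (Qflag p k p' k' l W Q F) := by
  obtain ⟨hFdim, hFle, hFperp, hFtop⟩ := hF
  have hpar' : p' % 2 = k' % 2 := by omega
  have hhalf : (p' + k') / 2 = m - l := by omega
  have hm' : l + (m - l) = m := by omega
  -- monotonicity of the flag
  have hmono : Monotone F := monotone_nat_of_le_succ (fun i => by
    by_cases h : i < p + k
    · exact hFle i h
    · rw [hFtop i (by omega), hFtop (i+1) (by omega)])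
  -- F m is Lagrangian
  have hFm : F m = orth p k (F m) := by
    have := hFperp m (by omega)
    rwa [show p + k - m = m by omega] at this
  -- Part A
  have hA : ∀ i ≤ m - l, W ≤ F (l + i) ∧ F (l + i) ≤ orth p k W := by
    intro i hi
    constructor
    · rw [← hFl]; exact hmono (by omega)
    · calc F (l + i) ≤ F m := hmono (by omega)
        _ = orth p k (F m) := hFm
        _ ≤ orth p k W := orth_mono p k (by rw [← hFl]; exact hmono (by omega))
  set G := Qflag p k p' k' l W Q F with hG
  -- kernel and dimension facts
  have hker : ∀ i ≤ m - l, F (l + i) ⊓ LinearMap.ker Q = W := by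
    intro i hi
    apply le_antisymm
    · rintro u ⟨hu1, hu2⟩
      exact hQker u ((hA i hi).2 hu1) (LinearMap.mem_ker.mp hu2)
    · exact le_inf (hA i hi).1 (fun u hu => LinearMap.mem_ker.mpr (hQ0 u hu))
  have hdim : ∀ i ≤ m - l, Module.finrank ℂ ((F (l + i)).map Q) = i := by
    intro i hi
    have h1 := finrank_map_add Q (F (l + i))
    rw [hker i hi, hWdim, hFdim (l + i) (by omega)] at h1
    omega
  have hinf : ∀ i ≤ m - l, F (l + i) ⊓ orth p k W = F (l + i) :=
    fun i hi => inf_eq_left.mpr (hA i hi).2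
  -- unfolding the two branches of Qflag
  have hGlow : ∀ i ≤ m - l, G i = (F (l + i)).map Q := by
    intro i hi
    rw [hG]
    show (if i ≤ (p' + k') / 2 then _ else _) = _
    rw [if_pos (by omega), hinf i hi]
  have hGhigh : ∀ i, m - l < i → i ≤ p' + k' →
      G i = orth p' k' ((F (l + (p' + k' - i))).map Q) := by
    intro i hi1 hi2
    rw [hG]
    show (if i ≤ (p' + k') / 2 then _ else _) = _
    rw [if_neg (by omega), if_pos hi2, hinf _ (by omega)]
  -- membership of relevant flag spaces in orth W
  have hFiO : ∀ i ≤ m - l, F (l + i) ≤ orth p k W := fun i hi => (hA i hi).2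
  -- isotropy of the middle space
  have hiso : (F m).map Q ≤ orth p' k' ((F m).map Q) := by
    rintro _ ⟨u, hu, rfl⟩
    rw [mem_orth_iff_s7]
    rintro _ ⟨v, hv, rfl⟩
    have huO : u ∈ orth p k W := by
      have := hFiO (m - l) le_rfl; rw [hm'] at this; exact this hu
    have hvO : v ∈ orth p k W := by
      have := hFiO (m - l) le_rfl; rw [hm'] at this; exact this hv
    rw [hQform v hvO u huO]
    have hu' : u ∈ orth p k (F m) := by rw [← hFm]; exact hu
    exact (mem_orth_iff_s7 p k (F m) u).mp hu' v hv
  -- dimension of G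
  have hGdim : ∀ i ≤ p' + k', Module.finrank ℂ (G i) = i := by
    intro i hi
    by_cases h : i ≤ m - l
    · rw [hGlow i h]; exact hdim i h
    · rw [hGhigh i (by omega) hi, finrank_orth p' k' hpar', hdim _ (by omega)]
      omega
  -- chain condition
  have hGle : ∀ i < p' + k', G i ≤ G (i + 1) := by
    intro i hi
    rcases lt_trichotomy i (m - l) with h | h | h
    · rw [hGlow i (by omega), hGlow (i+1) (by omega)]
      exact Submodule.map_mono (hmono (by omega))
    · subst h
      rw [hGlow (m - l) le_rfl, hGhigh (m - l + 1) (by omega) (by omega), hm']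
      have e1 : p' + k' - (m - l + 1) = m - l - 1 := by omega
      have e2 : l + (m - l - 1) = m - 1 := by omega
      rw [e1, e2]
      refine le_trans hiso (orth_mono p' k' ?_)
      exact Submodule.map_mono (hmono (by omega))
    · rw [hGhigh i (by omega) (by omega), hGhigh (i+1) (by omega) (by omega)]
      refine orth_mono p' k' (Submodule.map_mono (hmono (by omega)))
  -- perpendicularity condition
  have hGperp : ∀ i ≤ p' + k', G (p' + k' - i) = orth p' k' (G i) := by
    intro i hi
    rcases lt_trichotomy i (m - l) with h | h | h
    · rw [hGhigh (p' + k' - i) (by omega) (by omega), hGlow i (by omega),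
        show p' + k' - (p' + k' - i) = i by omega]
    · subst h
      rw [show p' + k' - (m - l) = m - l by omega, hGlow (m - l) le_rfl, hm']
      have h1 : Module.finrank ℂ ((F m).map Q) = m - l := by
        have := hdim (m - l) le_rfl; rwa [hm'] at this
      apply Submodule.eq_of_le_of_finrank_le hiso
      rw [finrank_orth p' k' hpar', h1]
      omega
    · rw [hGlow (p' + k' - i) (by omega), hGhigh i (by omega) hi,
        orth_orth p' k' hpar']
  -- top condition
  have hQW : (F l).map Q = ⊥ := by
    rw [hFl, Submodule.eq_bot_iff]
    rintro _ ⟨u, hu, rfl⟩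
    exact hQ0 u hu
  have hGtop : ∀ i, p' + k' ≤ i → G i = ⊤ := by
    intro i hi
    rcases eq_or_lt_of_le hi with h | h
    · rw [← h, hGhigh (p' + k') (by omega) le_rfl, Nat.sub_self, Nat.add_zero, hQW, orth_bot]
    · rw [hG]
      show (if i ≤ (p' + k') / 2 then _ else _) = _
      rw [if_neg (by omega), if_neg (by omega)]
  -- Springer, low part
  have hSpLow : ∀ j, j + 1 ≤ m - l → ((G (j + 1)).map (xmap p' k')) ≤ G j := by
    intro j hj
    rw [hGlow (j + 1) hj, hGlow j (by omega)]
    rintro _ ⟨_, ⟨u, hu, rfl⟩, rfl⟩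
    have huO : u ∈ orth p k W := hFiO (j + 1) hj hu
    rw [← hQx u huO]
    have hx : xmap p k u ∈ F (l + j) := hSp (l + j) (by omega) ⟨u, hu, rfl⟩
    exact ⟨xmap p k u, hx, rfl⟩
  -- Springer, high part
  have hSpHigh : ∀ i, m - l ≤ i → i < p' + k' → ((G (i + 1)).map (xmap p' k')) ≤ G i := by
    intro i hi1 hi2
    have hGi : G i = orth p' k' (G (p' + k' - i)) := by
      have := hGperp (p' + k' - i) (by omega)
      rwa [show p' + k' - (p' + k' - i) = i by omega] at this
    have hGi1 : G (i + 1) = orth p' k' (G (p' + k' - i - 1)) := by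
      have := hGperp (p' + k' - i - 1) (by omega)
      rwa [show p' + k' - (p' + k' - i - 1) = i + 1 by omega] at this
    rw [hGi1, hGi]
    rintro _ ⟨v, hv, rfl⟩
    rw [mem_orth_iff_s7]
    intro w hw
    have hxw : xmap p' k' w ∈ G (p' + k' - i - 1) := by
      apply hSpLow (p' + k' - i - 1) (by omega)
      rw [show p' + k' - i - 1 + 1 = p' + k' - i by omega]
      exact ⟨w, hw, rfl⟩
    have h0 : beta p' k' ((xmap p' k') w) v = 0 :=
      (mem_orth_iff_s7 p' k' _ v).mp hv _ hxw
    have h1 := beta_x p' k' w v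
    linear_combination h1 - h0
  refine ⟨hA, ⟨hGdim, hGle, hGperp, hGtop⟩, ?_⟩
  intro i hi
  by_cases h : i + 1 ≤ m - l
  · exact hSpLow i h
  · exact hSpHigh i (by omega) hi
end
end

section
/- Let λ = (5, 5), n = 10, and x = x_λ. Suppose F_• is a complete isotropic flag in (V_λ, β_λ) lying in the Springer fiber of x and satisfying F_1 = ⟨f_1⟩, F_1 + x(F_3) = F_2, F_3^⊥ = x^{−2}(F_3) (iterated preimage), and F_5 = x^{−1}(F_3). Then there exists (c, d) ∈ ℂ² with (c, d) ≠ (0, 0) such that F_3 = ⟨f_1, c·e_1 + d·f_2, c·e_2 + d·f_3⟩ and F_5 = ⟨e_1, f_1, f_2, c·e_2 + d·f_3, c·e_3 + d·f_4⟩. -/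
open Complex Submodule

noncomputable section

private lemma v0 : ((0:Fin 5):ℕ) = 0 := rfl
private lemma v1 : ((1:Fin 5):ℕ) = 1 := rfl
private lemma v2 : ((2:Fin 5):ℕ) = 2 := rfl
private lemma v3 : ((3:Fin 5):ℕ) = 3 := rfl
private lemma v4 : ((4:Fin 5):ℕ) = 4 := rfl

private lemma beta_formula (u w : V 5 5) : beta 5 5 u w =
    u (.inl 0) * w (.inr 4) - u (.inl 1) * w (.inr 3) + u (.inl 2) * w (.inr 2)
    - u (.inl 3) * w (.inr 1) + u (.inl 4) * w (.inr 0)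
    + w (.inl 0) * u (.inr 4) - w (.inl 1) * u (.inr 3) + w (.inl 2) * u (.inr 2)
    - w (.inl 3) * u (.inr 1) + w (.inl 4) * u (.inr 0) := by
  simp [beta, gram, Matrix.toLinearMap₂'_apply, Fintype.sum_sum_type, Fin.sum_univ_five,
    v0,v1,v2,v3,v4]
  ring

private lemma xe1 : xmap 5 5 (ee 5 5 1) = 0 := by
  funext s; rcases s with j | j <;> fin_cases j <;> simp [xmap, ee, v0,v1,v2,v3,v4]
private lemma xe2 : xmap 5 5 (ee 5 5 2) = ee 5 5 1 := by
  funext s; rcases s with j | j <;> fin_cases j <;> simp [xmap, ee, v0,v1,v2,v3,v4]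
private lemma xe3 : xmap 5 5 (ee 5 5 3) = ee 5 5 2 := by
  funext s; rcases s with j | j <;> fin_cases j <;> simp [xmap, ee, v0,v1,v2,v3,v4]
private lemma xf1 : xmap 5 5 (ff 5 5 1) = 0 := by
  funext s; rcases s with j | j <;> fin_cases j <;> simp [xmap, ff, v0,v1,v2,v3,v4]
private lemma xf2 : xmap 5 5 (ff 5 5 2) = ff 5 5 1 := by
  funext s; rcases s with j | j <;> fin_cases j <;> simp [xmap, ff, v0,v1,v2,v3,v4]
private lemma xf3 : xmap 5 5 (ff 5 5 3) = ff 5 5 2 := by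
  funext s; rcases s with j | j <;> fin_cases j <;> simp [xmap, ff, v0,v1,v2,v3,v4]
private lemma xf4 : xmap 5 5 (ff 5 5 4) = ff 5 5 3 := by
  funext s; rcases s with j | j <;> fin_cases j <;> simp [xmap, ff, v0,v1,v2,v3,v4]


/-- Example 2.12.  For `λ = (5,5)`, `n = 10`, `x = x_λ`: if `F` is a
complete isotropic flag in the Springer fiber of `x` with `F_1 = ⟨f_1⟩`,
`F_1 + x(F_3) = F_2`, `F_3^⊥ = x^{-2}(F_3)`, and `F_5 = x^{-1}(F_3)`, then there is
`(c,d) ≠ (0,0)` with `F_3 = ⟨f_1, c·e_1 + d·f_2, c·e_2 + d·f_3⟩` and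
`F_5 = ⟨e_1, f_1, f_2, c·e_2 + d·f_3, c·e_3 + d·f_4⟩`. -/
theorem statement16 (F : ℕ → Submodule ℂ (V 5 5))
    (hF : IsFlag 5 5 F) (hSp : InSpringer 5 5 F)
    (h1 : F 1 = Submodule.span ℂ {ff 5 5 1})
    (h2 : F 1 ⊔ (F 3).map (xmap 5 5) = F 2)
    (h3 : orth 5 5 (F 3) = Submodule.comap ((xmap 5 5) ^ 2) (F 3))
    (h5 : F 5 = Submodule.comap (xmap 5 5) (F 3)) :
    ∃ c d : ℂ, (c, d) ≠ (0, 0) ∧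
      F 3 = Submodule.span ℂ
        {ff 5 5 1, c • ee 5 5 1 + d • ff 5 5 2, c • ee 5 5 2 + d • ff 5 5 3} ∧
      F 5 = Submodule.span ℂ
        {ee 5 5 1, ff 5 5 1, ff 5 5 2,
         c • ee 5 5 2 + d • ff 5 5 3, c • ee 5 5 3 + d • ff 5 5 4} := by
  classical
  obtain ⟨hdim, hle, horth, -⟩ := hF
  have hF12 : F 1 ≤ F 2 := hle 1 (by norm_num)
  have hF23 : F 2 ≤ F 3 := hle 2 (by norm_num)
  have h55 : F 5 = orth 5 5 (F 5) := by
    have := horth 5 (by norm_num); simpa using this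
  -- pick v ∈ F 3 \ F 2
  have hlt : F 2 < F 3 := by
    refine lt_of_le_of_ne hF23 (fun h => ?_)
    have d2 := hdim 2 (by norm_num); have d3 := hdim 3 (by norm_num)
    rw [h] at d2; omega
  obtain ⟨v, hv3, hv2⟩ := SetLike.exists_of_lt hlt
  have hxv : xmap 5 5 v ∈ F 2 := hSp 2 (by norm_num) (Submodule.mem_map_of_mem hv3)
  have hx2 : xmap 5 5 (xmap 5 5 v) ∈ F 1 := hSp 1 (by norm_num) (Submodule.mem_map_of_mem hxv)
  rw [h1, Submodule.mem_span_singleton] at hx2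
  obtain ⟨s, hs⟩ := hx2
  -- coordinates of v
  set a1 := v (Sum.inl 0) with ha1
  set c := v (Sum.inl 1) with hc
  set b1 := v (Sum.inr 0) with hb1
  set b2 := v (Sum.inr 1) with hb2
  set d := v (Sum.inr 2) with hd
  have z1 : v (Sum.inl 2) = 0 := by
    have := congrFun hs (Sum.inl 0); simpa [xmap, ff, v0,v1,v2,v3,v4] using this.symm
  have z2 : v (Sum.inl 3) = 0 := by
    have := congrFun hs (Sum.inl 1); simpa [xmap, ff, v0,v1,v2,v3,v4] using this.symm
  have z3 : v (Sum.inl 4) = 0 := by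
    have := congrFun hs (Sum.inl 2); simpa [xmap, ff, v0,v1,v2,v3,v4] using this.symm
  have z4 : v (Sum.inr 3) = 0 := by
    have := congrFun hs (Sum.inr 1); simpa [xmap, ff, v0,v1,v2,v3,v4] using this.symm
  have z5 : v (Sum.inr 4) = 0 := by
    have := congrFun hs (Sum.inr 2); simpa [xmap, ff, v0,v1,v2,v3,v4] using this.symm
  have hveq : v = a1 • ee 5 5 1 + c • ee 5 5 2 + b1 • ff 5 5 1
      + b2 • ff 5 5 2 + d • ff 5 5 3 := by
    funext t
    rcases t with j | j <;> fin_cases j <;>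
      simp [ee, ff, v0,v1,v2,v3,v4, z1,z2,z3,z4,z5, ha1,hc,hb1,hb2,hd]
  have hxveq : xmap 5 5 v = c • ee 5 5 1 + b2 • ff 5 5 1 + d • ff 5 5 2 := by
    funext t
    rcases t with j | j <;> fin_cases j <;>
      simp [xmap, ee, ff, v0,v1,v2,v3,v4, z1,z2,z3,z4,z5, ha1,hc,hb1,hb2,hd]
  -- F 3 = F 2 ⊔ span {v}
  have hF3eq : F 2 ⊔ Submodule.span ℂ {v} = F 3 := by
    refine Submodule.eq_of_le_of_finrank_le
      (sup_le hF23 ((Submodule.span_singleton_le_iff_mem _ _).mpr hv3)) ?_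
    have hlt2 : F 2 < F 2 ⊔ Submodule.span ℂ {v} := by
      refine lt_of_le_of_ne le_sup_left (fun h => ?_)
      exact hv2 (h ▸ (le_sup_right (a := F 2)
        (Submodule.mem_span_singleton_self v)))
    have := Submodule.finrank_lt_finrank_of_lt hlt2
    have d2 := hdim 2 (by norm_num); have d3 := hdim 3 (by norm_num)
    omega
  -- F 2 = F 1 ⊔ span {xv}
  have hF2eq : F 1 ⊔ Submodule.span ℂ {xmap 5 5 v} = F 2 := by
    refine le_antisymm (sup_le hF12 ((Submodule.span_singleton_le_iff_mem _ _).mpr hxv)) ?_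
    rw [← h2]
    refine sup_le le_sup_left ?_
    rw [← hF3eq, Submodule.map_sup]
    refine sup_le (le_trans (hSp 1 (by norm_num)) (le_sup_left)) ?_
    rw [Submodule.map_span, Set.image_singleton]
    exact le_sup_right
  -- (c, d) ≠ (0, 0)
  have hcd : (c, d) ≠ (0, 0) := by
    intro h
    rw [Prod.mk.injEq] at h
    obtain ⟨hc0, hd0⟩ := h
    have hxv1 : xmap 5 5 v ∈ F 1 := by
      rw [h1, Submodule.mem_span_singleton]
      exact ⟨b2, by rw [hxveq, hc0, hd0]; module⟩
    have : F 2 = F 1 := le_antisymm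
      (by rw [← hF2eq]
          exact sup_le le_rfl ((Submodule.span_singleton_le_iff_mem _ _).mpr hxv1)) hF12
    have d1 := hdim 1 (by norm_num); have d2 := hdim 2 (by norm_num)
    rw [this] at d2; omega
  -- f1 ∈ F 3
  have hf11 : ff 5 5 1 ∈ F 1 := by rw [h1]; exact Submodule.mem_span_singleton_self _
  have hf13 : ff 5 5 1 ∈ F 3 := hF23 (hF12 hf11)
  -- w1 ∈ F 5 and isotropy
  set w1 : V 5 5 := a1 • ee 5 5 2 + c • ee 5 5 3 + b1 • ff 5 5 2 + b2 • ff 5 5 3 + d • ff 5 5 4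
    with hw1def
  have hxw1 : xmap 5 5 w1 = v := by
    funext t
    rcases t with j | j <;> fin_cases j <;>
      simp [hw1def, xmap, ee, ff, v0,v1,v2,v3,v4, z1,z2,z3,z4,z5, ha1,hc,hb1,hb2,hd]
  have hw15 : w1 ∈ F 5 := by rw [h5, Submodule.mem_comap, hxw1]; exact hv3
  have hiso : beta 5 5 w1 w1 = 0 := by
    have h' : w1 ∈ orth 5 5 (F 5) := h55 ▸ hw15
    exact (LinearMap.BilinForm.mem_orthogonal_iff.mp h') w1 hw15
  have key : c * b2 = a1 * d := by
    rw [beta_formula] at hiso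
    simp only [hw1def, Pi.add_apply, Pi.smul_apply, ee, ff, Sum.elim_inl, Sum.elim_inr,
      smul_eq_mul, v0,v1,v2,v3,v4] at hiso
    norm_num at hiso
    linear_combination hiso / 2
  -- the scalar t with a1 = t*c, b2 = t*d
  set t : ℂ := if c = 0 then b2 / d else a1 / c with htdef
  have hdne : c = 0 → d ≠ 0 := fun hc0 hd0 => hcd (by rw [hc0, hd0])
  have ht1 : a1 = t * c := by
    by_cases hc0 : c = 0
    · have hd' := hdne hc0
      have ha0 : a1 = 0 := by
        have h0 : a1 * d = 0 := by rw [← key, hc0]; ring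
        rcases mul_eq_zero.mp h0 with h | h
        · exact h
        · exact absurd h hd'
      rw [ha0, hc0, mul_zero]
    · rw [htdef, if_neg hc0]; field_simp
  have ht2 : b2 = t * d := by
    by_cases hc0 : c = 0
    · have hd' := hdne hc0
      rw [htdef, if_pos hc0, div_mul_cancel₀ _ hd']
    · rw [htdef, if_neg hc0, div_mul_eq_mul_div, ← key, mul_comm c b2, mul_div_assoc,
        div_self hc0, mul_one]
  -- generators of F 3
  have hg2mem : c • ee 5 5 1 + d • ff 5 5 2 ∈ F 3 := by
    have heq : c • ee 5 5 1 + d • ff 5 5 2 = xmap 5 5 v - b2 • ff 5 5 1 := by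
      rw [hxveq]; module
    rw [heq]; exact sub_mem (hF23 hxv) (Submodule.smul_mem _ _ hf13)
  have hg3mem : c • ee 5 5 2 + d • ff 5 5 3 ∈ F 3 := by
    have heq : c • ee 5 5 2 + d • ff 5 5 3
        = v - b1 • ff 5 5 1 - t • (c • ee 5 5 1 + d • ff 5 5 2) := by
      rw [hveq, ht1, ht2]; module
    rw [heq]
    exact sub_mem (sub_mem hv3 (Submodule.smul_mem _ _ hf13)) (Submodule.smul_mem _ _ hg2mem)
  -- F 3 as a span
  have hF3span : F 3 = Submodule.span ℂ
      {ff 5 5 1, c • ee 5 5 1 + d • ff 5 5 2, c • ee 5 5 2 + d • ff 5 5 3} := by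
    refine le_antisymm ?_ ?_
    · rw [← hF3eq, ← hF2eq, h1]
      have m1 : ff 5 5 1 ∈ Submodule.span ℂ
          {ff 5 5 1, c • ee 5 5 1 + d • ff 5 5 2, c • ee 5 5 2 + d • ff 5 5 3} :=
        Submodule.subset_span (by simp)
      have m2 : c • ee 5 5 1 + d • ff 5 5 2 ∈ Submodule.span ℂ
          {ff 5 5 1, c • ee 5 5 1 + d • ff 5 5 2, c • ee 5 5 2 + d • ff 5 5 3} :=
        Submodule.subset_span (by simp)
      have m3 : c • ee 5 5 2 + d • ff 5 5 3 ∈ Submodule.span ℂ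
          {ff 5 5 1, c • ee 5 5 1 + d • ff 5 5 2, c • ee 5 5 2 + d • ff 5 5 3} :=
        Submodule.subset_span (by simp)
      refine sup_le (sup_le ?_ ?_) ?_
      · exact (Submodule.span_singleton_le_iff_mem _ _).mpr m1
      · refine (Submodule.span_singleton_le_iff_mem _ _).mpr ?_
        have heq : xmap 5 5 v = b2 • ff 5 5 1 + (c • ee 5 5 1 + d • ff 5 5 2) := by
          rw [hxveq]; module
        rw [heq]
        exact add_mem (Submodule.smul_mem _ _ m1) m2
      · refine (Submodule.span_singleton_le_iff_mem _ _).mpr ?_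
        have heq : v = b1 • ff 5 5 1 + t • (c • ee 5 5 1 + d • ff 5 5 2)
            + (c • ee 5 5 2 + d • ff 5 5 3) := by
          rw [hveq, ht1, ht2]; module
        rw [heq]
        exact add_mem (add_mem (Submodule.smul_mem _ _ m1) (Submodule.smul_mem _ _ m2)) m3
    · rw [Submodule.span_le]
      rintro x hx
      simp only [Set.mem_insert_iff, Set.mem_singleton_iff] at hx
      rcases hx with rfl | rfl | rfl
      · exact hf13
      · exact hg2mem
      · exact hg3mem
  -- F 5 as a span
  have hF5span : F 5 = Submodule.span ℂ
      {ee 5 5 1, ff 5 5 1, ff 5 5 2,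
       c • ee 5 5 2 + d • ff 5 5 3, c • ee 5 5 3 + d • ff 5 5 4} := by
    refine le_antisymm ?_ ?_
    · intro u hu
      rw [h5, Submodule.mem_comap, hF3span] at hu
      obtain ⟨α, w1', hw1', hxu1⟩ := Submodule.mem_span_insert.mp hu
      obtain ⟨β, w2', hw2', hxu2⟩ := Submodule.mem_span_insert.mp hw1'
      obtain ⟨γ, hw2e⟩ := Submodule.mem_span_singleton.mp hw2'
      have hxu : xmap 5 5 u = α • ff 5 5 1 + (β • (c • ee 5 5 1 + d • ff 5 5 2)
          + γ • (c • ee 5 5 2 + d • ff 5 5 3)) := by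
        rw [hxu1, hxu2, ← hw2e]
      have u1 : u (Sum.inl 1) = β * c := by
        have := congrFun hxu (Sum.inl 0); simpa [xmap, ee, ff, v0,v1,v2,v3,v4] using this
      have u2 : u (Sum.inl 2) = γ * c := by
        have := congrFun hxu (Sum.inl 1); simpa [xmap, ee, ff, v0,v1,v2,v3,v4] using this
      have u3 : u (Sum.inl 3) = 0 := by
        have := congrFun hxu (Sum.inl 2); simpa [xmap, ee, ff, v0,v1,v2,v3,v4] using this
      have u4 : u (Sum.inl 4) = 0 := by
        have := congrFun hxu (Sum.inl 3); simpa [xmap, ee, ff, v0,v1,v2,v3,v4] using this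
      have u5 : u (Sum.inr 1) = α := by
        have := congrFun hxu (Sum.inr 0); simpa [xmap, ee, ff, v0,v1,v2,v3,v4] using this
      have u6 : u (Sum.inr 2) = β * d := by
        have := congrFun hxu (Sum.inr 1); simpa [xmap, ee, ff, v0,v1,v2,v3,v4] using this
      have u7 : u (Sum.inr 3) = γ * d := by
        have := congrFun hxu (Sum.inr 2); simpa [xmap, ee, ff, v0,v1,v2,v3,v4] using this
      have u8 : u (Sum.inr 4) = 0 := by
        have := congrFun hxu (Sum.inr 3); simpa [xmap, ee, ff, v0,v1,v2,v3,v4] using this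
      have hueq : u = u (Sum.inl 0) • ee 5 5 1 + u (Sum.inr 0) • ff 5 5 1 + α • ff 5 5 2
          + β • (c • ee 5 5 2 + d • ff 5 5 3) + γ • (c • ee 5 5 3 + d • ff 5 5 4) := by
        funext s
        rcases s with j | j <;> fin_cases j <;>
          simp [ee, ff, v0,v1,v2,v3,v4, u1,u2,u3,u4,u5,u6,u7,u8]
      rw [hueq]
      refine add_mem (add_mem (add_mem (add_mem ?_ ?_) ?_) ?_) ?_ <;>
        exact Submodule.smul_mem _ _ (Submodule.subset_span (by simp))
    · rw [Submodule.span_le]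
      rintro x hx
      simp only [Set.mem_insert_iff, Set.mem_singleton_iff] at hx
      rcases hx with rfl | rfl | rfl | rfl | rfl
      · rw [SetLike.mem_coe, h5, Submodule.mem_comap, xe1]; exact zero_mem _
      · rw [SetLike.mem_coe, h5, Submodule.mem_comap, xf1]; exact zero_mem _
      · rw [SetLike.mem_coe, h5, Submodule.mem_comap, xf2]; exact hf13
      · rw [SetLike.mem_coe, h5, Submodule.mem_comap]
        have heq : xmap 5 5 (c • ee 5 5 2 + d • ff 5 5 3) = c • ee 5 5 1 + d • ff 5 5 2 := by
          rw [map_add, map_smul, map_smul, xe2, xf3]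
        rw [heq]; exact hg2mem
      · rw [SetLike.mem_coe, h5, Submodule.mem_comap]
        have heq : xmap 5 5 (c • ee 5 5 3 + d • ff 5 5 4) = c • ee 5 5 2 + d • ff 5 5 3 := by
          rw [map_add, map_smul, map_smul, xe3, xf4]
        rw [heq]; exact hg3mem
  exact ⟨c, d, hcd, hF3span, hF5span⟩
end
end
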